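/- arXiv:1609.05280 — 3 statements merged into one kernel-verified Lean document; each statement's English description precedes it below -/
import Mathlib

section
/- Necessity of strict inequality in the sequence embedding when exponents increase: if $0<q_1,q_2\le\infty$ with $1/q_2>1/q_1$, $\alpha\in[0,1)$, and the embedding $l_{q_1}^{s_1,\alpha}\subset l_{q_2}^{s_2,\alpha}$ holds over $\mathbb{Z}^n$, then $(1-\alpha)/q_2+s_2/n<(1-\alpha)/q_1+s_1/n$. -/
open MeasureTheory SchwartzMap Metric Set Function
open scoped ENNReal NNReal FourierTransform SchwartzMap

noncomputable section

/-- Euclidean space `ℝⁿ`. -/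
abbrev En (n : ℕ) := EuclideanSpace ℝ (Fin n)

/-- The lattice point `k ∈ ℤⁿ` viewed as a point of `ℝⁿ`. -/
def kv {n : ℕ} (k : Fin n → ℤ) : En n := WithLp.toLp 2 (fun i => (k i : ℝ))

/-- The japanese bracket `⟨k⟩ = (1+|k|²)^{1/2}` of a lattice point. -/
def jb {n : ℕ} (k : Fin n → ℤ) : ℝ := (1 + ∑ i, ((k i : ℝ)) ^ 2) ^ ((1 : ℝ) / 2)

/-- The japanese bracket `⟨y⟩ = (1+|y|²)^{1/2}` of a point of `ℝⁿ`. -/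
def jbr {n : ℕ} (y : En n) : ℝ := (1 + ‖y‖ ^ 2) ^ ((1 : ℝ) / 2)

/-- The scale `⟨k⟩^{α/(1-α)}` of the `α`-decomposition piece indexed by `k`. -/
def scl {n : ℕ} (α : ℝ) (k : Fin n → ℤ) : ℝ := jb k ^ (α / (1 - α))

/-- The center `⟨k⟩^{α/(1-α)} k` of the `α`-decomposition piece indexed by `k`. -/
def cen {n : ℕ} (α : ℝ) (k : Fin n → ℤ) : En n := scl α k • kv k

/-- A standard `α`-covering smooth partition of unity `{η_k^α}_{k ∈ ℤⁿ}` on frequency space. -/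
structure AlphaPartition (n : ℕ) (α : ℝ) where
  η : (Fin n → ℤ) → En n → ℂ
  C₀ : ℝ
  C₀_pos : 0 < C₀
  c₀ : ℝ
  c₀_pos : 0 < c₀
  smooth : ∀ k, ContDiff ℝ (⊤ : ℕ∞) (η k)
  support_subset : ∀ k, Function.support (η k) ⊆ Metric.ball (cen α k) (C₀ * scl α k)
  lower : ∀ k ξ, ξ ∈ Metric.ball (cen α k) (c₀ * scl α k) → 1 ≤ ‖η k ξ‖
  sum_one : ∀ ξ, ∑' k, η k ξ = 1
  deriv_bound : ∀ m : ℕ, ∃ Cm > 0, ∀ k ξ,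
    ‖iteratedFDeriv ℝ m (η k) ξ‖ ≤ Cm * jb k ^ (-(m : ℝ) * α / (1 - α))

/-- The frequency-localization operator `□_k^α f = 𝓕⁻¹(η_k^α 𝓕 f)`. -/
def box {n : ℕ} {α : ℝ} (P : AlphaPartition n α) (k : Fin n → ℤ) (f : En n → ℂ) : En n → ℂ :=
  𝓕⁻ (fun ξ => P.η k ξ * 𝓕 f ξ)

/-- The frequency-localization operator realized as convolution with `𝓕⁻¹ η_k^α`
(suitable for merely bounded `f`). -/
def boxConv {n : ℕ} {α : ℝ} (P : AlphaPartition n α) (k : Fin n → ℤ) (f : En n → ℂ) : En n → ℂ :=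
  fun x => ∫ y, 𝓕⁻ (P.η k) y * f (x - y)

/-- The `α`-modulation space quasinorm `‖f‖_{M_{p,q}^{s,α}}`. -/
def MN {n : ℕ} {α : ℝ} (P : AlphaPartition n α) (p q : ℝ≥0∞) (s : ℝ) (f : En n → ℂ) : ℝ≥0∞ :=
  if q = ∞ then ⨆ k, ENNReal.ofReal (jb k ^ (s / (1 - α))) * eLpNorm (box P k f) p volume
  else (∑' k, ENNReal.ofReal (jb k ^ (s / (1 - α))) ^ q.toReal *
      eLpNorm (box P k f) p volume ^ q.toReal) ^ (1 / q.toReal)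

/-- The local Hardy space quasinorm `‖f‖_{h^p}` defined through the maximal function
`sup_{0<t<1} |ψ_t * f|` associated with a Schwartz function `ψ`. -/
def hpN {n : ℕ} (ψ : 𝓢(En n, ℂ)) (p : ℝ≥0∞) (f : En n → ℂ) : ℝ≥0∞ :=
  (∫⁻ x, (⨆ t ∈ Set.Ioo (0 : ℝ) 1,
      (‖∫ y, ((t ^ (-(n : ℝ)) : ℝ) : ℂ) * ψ (t⁻¹ • y) * f (x - y)‖₊ : ℝ≥0∞)) ^ p.toReal) ^ (1 / p.toReal)

/-- The weighted sequence quasinorm `‖a‖_{l_q^{s,α}}` over `ℤⁿ`. -/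
def seqN (n : ℕ) (q : ℝ≥0∞) (s α : ℝ) (a : (Fin n → ℤ) → ℝ) : ℝ≥0∞ :=
  if q = ∞ then ⨆ k, (‖a k‖₊ : ℝ≥0∞) * ENNReal.ofReal (jb k ^ (s / (1 - α)))
  else (∑' k, (‖a k‖₊ : ℝ≥0∞) ^ q.toReal * ENNReal.ofReal (jb k ^ (s / (1 - α))) ^ q.toReal) ^ (1 / q.toReal)


namespace SeqAux

variable {n : ℕ}

lemma jb_pos (k : Fin n → ℤ) : 0 < jb k := by
  unfold jb; positivity

lemma one_le_jb (k : Fin n → ℤ) : 1 ≤ jb k := by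
  unfold jb
  have h : (0:ℝ) ≤ ∑ i, ((k i : ℝ))^2 := by positivity
  calc (1:ℝ) = 1 ^ ((1:ℝ)/2) := (Real.one_rpow _).symm
  _ ≤ _ := Real.rpow_le_rpow zero_le_one (by linarith) (by norm_num)

def Bset (n j : ℕ) : Finset (Fin n → ℤ) :=
  Fintype.piFinset fun _ => Finset.Ico ((2:ℤ)^j) (2^(j+1))

lemma mem_Bset {j : ℕ} {k : Fin n → ℤ} :
    k ∈ Bset n j ↔ ∀ i, (2:ℤ)^j ≤ k i ∧ k i < 2^(j+1) := by
  simp [Bset, Fintype.mem_piFinset, Finset.mem_Ico]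

lemma card_Bset (j : ℕ) : (Bset n j).card = 2^(j*n) := by
  have h1 : (2:ℤ)^(j+1) - 2^j = ((2^j : ℕ) : ℤ) := by push_cast; ring
  simp only [Bset, Fintype.card_piFinset, Int.card_Ico, h1, Int.toNat_natCast,
    Finset.prod_const, Finset.card_univ, Fintype.card_fin]
  rw [← pow_mul]

lemma disjoint_Bset (hn : 0 < n) {j j' : ℕ} (hjj : j ≠ j') :
    Disjoint (Bset n j) (Bset n j') := by
  rw [Finset.disjoint_left]
  intro k hk hk'
  obtain ⟨h1, h2⟩ := mem_Bset.mp hk ⟨0, hn⟩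
  obtain ⟨h1', h2'⟩ := mem_Bset.mp hk' ⟨0, hn⟩
  rcases lt_or_gt_of_ne hjj with hlt | hlt
  · have : (2:ℤ)^(j+1) ≤ 2^j' := pow_le_pow_right₀ (by norm_num) hlt
    omega
  · have : (2:ℤ)^(j'+1) ≤ 2^j := pow_le_pow_right₀ (by norm_num) hlt
    omega

lemma two_pow_le_jb (hn : 0 < n) {j : ℕ} {k : Fin n → ℤ} (hk : k ∈ Bset n j) :
    (2:ℝ)^j ≤ jb k := by
  have h1 := (mem_Bset.mp hk ⟨0, hn⟩).1
  have h1' : (2:ℝ)^j ≤ ((k ⟨0, hn⟩ : ℤ) : ℝ) := by exact_mod_cast h1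
  have h2 : ((2:ℝ)^j)^2 ≤ 1 + ∑ i, ((k i : ℝ))^2 := by
    have hs : ((k ⟨0, hn⟩ : ℤ) : ℝ)^2 ≤ ∑ i, ((k i : ℝ))^2 :=
      Finset.single_le_sum (f := fun i => ((k i : ℝ))^2) (fun i _ => by positivity)
        (Finset.mem_univ _)
    nlinarith [pow_pos (show (0:ℝ) < 2 by norm_num) j]
  calc (2:ℝ)^j = (((2:ℝ)^j)^2) ^ ((1:ℝ)/2) := by
        rw [← Real.sqrt_eq_rpow, Real.sqrt_sq (by positivity)]
  _ ≤ jb k := Real.rpow_le_rpow (by positivity) h2 (by norm_num)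

lemma jb_le_two_pow (hn : 0 < n) {j : ℕ} {k : Fin n → ℤ} (hk : k ∈ Bset n j) :
    jb k ≤ Real.sqrt (1 + 4*n) * 2^j := by
  have hb : ∀ i, ((k i : ℝ))^2 ≤ 4 * ((2:ℝ)^j)^2 := by
    intro i
    obtain ⟨h1, h2⟩ := mem_Bset.mp hk i
    have h1' : (2:ℝ)^j ≤ (k i : ℝ) := by exact_mod_cast h1
    have h2' : ((k i : ℝ)) < (2:ℝ)^(j+1) := by exact_mod_cast h2
    rw [pow_succ] at h2'
    nlinarith [pow_pos (show (0:ℝ) < 2 by norm_num) j]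
  have hsum : 1 + ∑ i, ((k i : ℝ))^2 ≤ (1 + 4*n) * ((2:ℝ)^j)^2 := by
    have hs : ∑ i, ((k i : ℝ))^2 ≤ ∑ _i : Fin n, 4 * ((2:ℝ)^j)^2 :=
      Finset.sum_le_sum (fun i _ => hb i)
    rw [Finset.sum_const, Finset.card_univ, Fintype.card_fin, nsmul_eq_mul] at hs
    have h1 : (1:ℝ) ≤ ((2:ℝ)^j)^2 := by
      have h2 : (1:ℝ) ≤ (2:ℝ)^j := one_le_pow₀ (by norm_num)
      nlinarith
    nlinarith
  calc jb k ≤ ((1 + 4*n) * ((2:ℝ)^j)^2) ^ ((1:ℝ)/2) :=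
        Real.rpow_le_rpow (by positivity) hsum (by norm_num)
  _ = Real.sqrt (1 + 4*n) * 2^j := by
        rw [← Real.sqrt_eq_rpow, Real.sqrt_mul (by positivity), Real.sqrt_sq (by positivity)]

lemma term_eq {x w Q bb : ℝ} (hx : 0 < x) (hQ : 0 ≤ Q) :
    (‖x ^ (-bb)‖₊ : ℝ≥0∞)^Q * ENNReal.ofReal (x ^ w)^Q =
      ENNReal.ofReal (x ^ ((w - bb)*Q)) := by
  rw [← enorm_eq_nnnorm, Real.enorm_eq_ofReal (Real.rpow_nonneg hx.le _),
      ENNReal.ofReal_rpow_of_nonneg (Real.rpow_nonneg hx.le _) hQ,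
      ENNReal.ofReal_rpow_of_nonneg (Real.rpow_nonneg hx.le _) hQ,
      ← ENNReal.ofReal_mul (by positivity)]
  congr 1
  rw [← Real.rpow_mul hx.le, ← Real.rpow_mul hx.le, ← Real.rpow_add hx,
    show -bb*Q + w*Q = (w - bb)*Q by ring]

end SeqAux

/-- necessity of the strict inequality in the sequence embedding when the
integrability exponent increases, i.e. when `1/q₂ > 1/q₁`. -/
theorem seq_embedding_necessity_strict (n : ℕ) (hn : 0 < n) (q₁ q₂ : ℝ≥0∞) (hq₁ : 0 < q₁)
    (hq₂ : 0 < q₂) (s₁ s₂ α : ℝ) (hα : 0 ≤ α) (hα1 : α < 1)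
    (hq : (q₁⁻¹).toReal < (q₂⁻¹).toReal)
    (h : ∃ C : ℝ≥0, ∀ a : (Fin n → ℤ) → ℝ, seqN n q₂ s₂ α a ≤ C * seqN n q₁ s₁ α a) :
    (1 - α) * (q₂⁻¹).toReal + s₂ / n < (1 - α) * (q₁⁻¹).toReal + s₁ / n := by
  by_contra hcon
  push_neg at hcon
  obtain ⟨C, hC⟩ := h
  set r := (q₁⁻¹).toReal with hr
  set t := (q₂⁻¹).toReal with ht
  have hr0 : 0 ≤ r := ENNReal.toReal_nonneg
  have ht0 : 0 < t := lt_of_le_of_lt hr0 hq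
  have h1α : (0:ℝ) < 1 - α := by linarith
  have hn' : (0:ℝ) < n := by exact_mod_cast hn
  have hq₂top : q₂ ≠ ∞ := by
    intro hq2
    rw [hq2] at ht
    simp at ht
    linarith
  have hQ₂ : 0 < q₂.toReal := ENNReal.toReal_pos hq₂.ne' hq₂top
  have htQ : t = q₂.toReal⁻¹ := by rw [ht, ENNReal.toReal_inv]
  set b : ℝ := n*r + s₁/(1-α) with hbdef
  -- exponent inequality from the negated conclusion
  have hmul := mul_le_mul_of_nonneg_left hcon hn'.le
  have e1 : (n:ℝ) * (s₁/n) = s₁ := by field_simp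
  have e2 : (n:ℝ) * (s₂/n) = s₂ := by field_simp
  rw [mul_add, mul_add, e1, e2] at hmul
  have key1 : b - s₂/(1-α) ≤ (n:ℝ)*t := by
    have h3 : (s₁ - s₂)/(1-α) ≤ (n:ℝ)*t - n*r := by
      rw [div_le_iff₀ h1α]
      nlinarith [hmul]
    have h4 : s₁/(1-α) - s₂/(1-α) = (s₁-s₂)/(1-α) := div_sub_div_same _ _ _
    rw [hbdef]
    linarith
  have hd : (b - s₂/(1-α)) * q₂.toReal ≤ (n:ℝ) := by
    have htQ' : t * q₂.toReal = 1 := by rw [htQ]; field_simp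
    calc (b - s₂/(1-α)) * q₂.toReal ≤ ((n:ℝ)*t) * q₂.toReal :=
          mul_le_mul_of_nonneg_right key1 hQ₂.le
    _ = (n:ℝ) := by rw [mul_assoc, htQ', mul_one]
  have hexp₂ : -(n:ℝ) ≤ (s₂/(1-α) - b) * q₂.toReal := by nlinarith [hd]
  set cA : ℝ := Real.sqrt (1 + 4*n) with hcAdef
  have hcApos : 0 < cA := Real.sqrt_pos.mpr (by positivity)
  set K : ℝ≥0∞ := ENNReal.ofReal (cA ^ (-(n:ℝ))) with hKdef
  have hcast : ∀ j : ℕ, ((2^(j*n) : ℕ) : ℝ≥0∞) = ENNReal.ofReal ((2:ℝ)^(j*n)) := by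
    intro j
    rw [← ENNReal.ofReal_natCast]
    norm_num
  -- the key inequality for every J
  have key : ∀ J : ℕ, (J:ℝ≥0∞)^t * K^t ≤ (C:ℝ≥0∞) * (J:ℝ≥0∞)^r := by
    intro J
    classical
    set S : Finset (Fin n → ℤ) := (Finset.range J).biUnion (SeqAux.Bset n) with hS
    set a : (Fin n → ℤ) → ℝ := fun k => if k ∈ S then jb k ^ (-b) else 0 with ha
    have haS : ∀ k ∈ S, a k = jb k ^ (-b) := fun k hk => if_pos hk
    have haS' : ∀ k ∉ S, a k = 0 := fun k hk => if_neg hk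
    have hpair : (↑(Finset.range J) : Set ℕ).PairwiseDisjoint (SeqAux.Bset n) := by
      intro j _ j' _ hjj
      exact SeqAux.disjoint_Bset hn hjj
    -- lower bound for the q₂ norm
    have hterm₂ : ∀ j ∈ Finset.range J, ∀ k ∈ SeqAux.Bset n j,
        ENNReal.ofReal (cA ^ (-(n:ℝ)) * ((2:ℝ)^(j*n))⁻¹) ≤
          (‖a k‖₊ : ℝ≥0∞)^q₂.toReal * ENNReal.ofReal (jb k ^ (s₂/(1-α)))^q₂.toReal := by
      intro j hj k hk
      rw [haS k (Finset.mem_biUnion.mpr ⟨j, hj, hk⟩),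
        SeqAux.term_eq (SeqAux.jb_pos k) hQ₂.le]
      apply ENNReal.ofReal_le_ofReal
      have step3 : cA ^ (-(n:ℝ)) * ((2:ℝ)^(j*n))⁻¹ = (cA * 2^j) ^ (-(n:ℝ)) := by
        rw [Real.mul_rpow hcApos.le (by positivity)]
        congr 1
        rw [Real.rpow_neg (by positivity), Real.rpow_natCast, ← pow_mul]
      calc cA ^ (-(n:ℝ)) * ((2:ℝ)^(j*n))⁻¹ = (cA * 2^j) ^ (-(n:ℝ)) := step3
      _ ≤ jb k ^ (-(n:ℝ)) :=
            Real.rpow_le_rpow_of_nonpos (SeqAux.jb_pos k) (SeqAux.jb_le_two_pow hn hk)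
              (by simp)
      _ ≤ jb k ^ ((s₂/(1-α) - b) * q₂.toReal) :=
            Real.rpow_le_rpow_of_exponent_le (SeqAux.one_le_jb k) hexp₂
    have hblock₂ : ∀ j ∈ Finset.range J,
        K ≤ ∑ k ∈ SeqAux.Bset n j,
          (‖a k‖₊ : ℝ≥0∞)^q₂.toReal * ENNReal.ofReal (jb k ^ (s₂/(1-α)))^q₂.toReal := by
      intro j hj
      have hcard := Finset.card_nsmul_le_sum (SeqAux.Bset n j) _ _ (hterm₂ j hj)
      rw [SeqAux.card_Bset, nsmul_eq_mul, hcast j,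
        ← ENNReal.ofReal_mul (by positivity)] at hcard
      refine le_trans (le_of_eq ?_) hcard
      rw [hKdef]
      congr 1
      have h2pos : (0:ℝ) < (2:ℝ)^(j*n) := by positivity
      field_simp
    have htsum₂ : (J:ℝ≥0∞) * K ≤
        ∑' k, (‖a k‖₊ : ℝ≥0∞)^q₂.toReal * ENNReal.ofReal (jb k ^ (s₂/(1-α)))^q₂.toReal := by
      refine le_trans ?_ (ENNReal.sum_le_tsum S)
      rw [hS, Finset.sum_biUnion hpair]
      calc (J:ℝ≥0∞) * K = ∑ _j ∈ Finset.range J, K := by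
            rw [Finset.sum_const, Finset.card_range, nsmul_eq_mul]
      _ ≤ _ := Finset.sum_le_sum hblock₂
    have hlower : (J:ℝ≥0∞)^t * K^t ≤ seqN n q₂ s₂ α a := by
      rw [seqN, if_neg hq₂top]
      calc (J:ℝ≥0∞)^t * K^t = ((J:ℝ≥0∞) * K)^(1/q₂.toReal) := by
            rw [ENNReal.mul_rpow_of_nonneg _ _ (by positivity : (0:ℝ) ≤ 1/q₂.toReal),
              one_div, ← htQ]
      _ ≤ _ := ENNReal.rpow_le_rpow htsum₂ (by positivity)
    -- upper bound for the q₁ norm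
    have hupper : seqN n q₁ s₁ α a ≤ (J:ℝ≥0∞)^r := by
      by_cases hq₁top : q₁ = ∞
      · have hr0' : r = 0 := by rw [hr, hq₁top]; simp
        rw [seqN, if_pos hq₁top, hr0', ENNReal.rpow_zero]
        apply iSup_le
        intro k
        by_cases hk : k ∈ S
        · rw [haS k hk, ← enorm_eq_nnnorm,
            Real.enorm_eq_ofReal (Real.rpow_nonneg (SeqAux.jb_pos k).le _),
            ← ENNReal.ofReal_mul (Real.rpow_nonneg (SeqAux.jb_pos k).le _),
            ← Real.rpow_add (SeqAux.jb_pos k),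
            show -b + s₁/(1-α) = 0 by rw [hbdef, hr0']; ring,
            Real.rpow_zero, ENNReal.ofReal_one]
        · rw [haS' k hk]
          simp
      · have hQ₁ : 0 < q₁.toReal := ENNReal.toReal_pos hq₁.ne' hq₁top
        have hrQ : r = q₁.toReal⁻¹ := by rw [hr, ENNReal.toReal_inv]
        have hexp₁ : (s₁/(1-α) - b) * q₁.toReal = -(n:ℝ) := by
          rw [hbdef, hrQ]
          have hinv : q₁.toReal⁻¹ * q₁.toReal = 1 := inv_mul_cancel₀ hQ₁.ne'
          linear_combination (-(n:ℝ)) * hinv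
        have hterm₁ : ∀ j ∈ Finset.range J, ∀ k ∈ SeqAux.Bset n j,
            (‖a k‖₊ : ℝ≥0∞)^q₁.toReal * ENNReal.ofReal (jb k ^ (s₁/(1-α)))^q₁.toReal ≤
              ENNReal.ofReal (((2:ℝ)^(j*n))⁻¹) := by
          intro j hj k hk
          rw [haS k (Finset.mem_biUnion.mpr ⟨j, hj, hk⟩),
            SeqAux.term_eq (SeqAux.jb_pos k) hQ₁.le, hexp₁]
          apply ENNReal.ofReal_le_ofReal
          calc jb k ^ (-(n:ℝ)) ≤ ((2:ℝ)^j) ^ (-(n:ℝ)) :=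
                Real.rpow_le_rpow_of_nonpos (by positivity)
                  (SeqAux.two_pow_le_jb hn hk) (by simp)
          _ = ((2:ℝ)^(j*n))⁻¹ := by
                rw [Real.rpow_neg (by positivity), Real.rpow_natCast, ← pow_mul]
        have hblock₁ : ∀ j ∈ Finset.range J,
            ∑ k ∈ SeqAux.Bset n j,
              (‖a k‖₊ : ℝ≥0∞)^q₁.toReal * ENNReal.ofReal (jb k ^ (s₁/(1-α)))^q₁.toReal
              ≤ 1 := by
          intro j hj
          have hcard := Finset.sum_le_card_nsmul (SeqAux.Bset n j) _ _ (hterm₁ j hj)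
          rw [SeqAux.card_Bset, nsmul_eq_mul, hcast j,
            ← ENNReal.ofReal_mul (by positivity),
            mul_inv_cancel₀ (by positivity : ((2:ℝ)^(j*n)) ≠ 0), ENNReal.ofReal_one] at hcard
          exact hcard
        have hvanish : ∀ k ∉ S,
            (‖a k‖₊ : ℝ≥0∞)^q₁.toReal * ENNReal.ofReal (jb k ^ (s₁/(1-α)))^q₁.toReal = 0 := by
          intro k hk
          rw [haS' k hk]
          simp [ENNReal.zero_rpow_of_pos hQ₁]
        have htsum₁ :
            (∑' k, (‖a k‖₊ : ℝ≥0∞)^q₁.toReal *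
              ENNReal.ofReal (jb k ^ (s₁/(1-α)))^q₁.toReal) ≤ (J:ℝ≥0∞) := by
          rw [tsum_eq_sum hvanish, hS, Finset.sum_biUnion hpair]
          calc _ ≤ ∑ _j ∈ Finset.range J, (1:ℝ≥0∞) := Finset.sum_le_sum hblock₁
          _ = (J:ℝ≥0∞) := by simp
        rw [seqN, if_neg hq₁top]
        calc _ ≤ (J:ℝ≥0∞)^(1/q₁.toReal) := ENNReal.rpow_le_rpow htsum₁ (by positivity)
        _ = (J:ℝ≥0∞)^r := by rw [hrQ, one_div]
    calc (J:ℝ≥0∞)^t * K^t ≤ seqN n q₂ s₂ α a := hlower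
    _ ≤ (C:ℝ≥0∞) * seqN n q₁ s₁ α a := hC a
    _ ≤ (C:ℝ≥0∞) * (J:ℝ≥0∞)^r := mul_le_mul_right hupper _
  -- derive a real inequality valid for all J ≥ 1
  set κ : ℝ := (cA ^ (-(n:ℝ))) ^ t with hκdef
  have hκ : 0 < κ := Real.rpow_pos_of_pos (Real.rpow_pos_of_pos hcApos _) _
  have main : ∀ J : ℕ, 1 ≤ J → ((J:ℝ))^(t - r) * κ ≤ (C:ℝ) := by
    intro J hJ
    have hJ0 : (J:ℝ≥0∞) ≠ 0 := by
      exact_mod_cast (Nat.cast_ne_zero (R := ℝ≥0∞)).mpr (by omega)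
    have hJtop : (J:ℝ≥0∞) ≠ ∞ := ENNReal.natCast_ne_top J
    have hk := key J
    have hsplit : (J:ℝ≥0∞)^t = (J:ℝ≥0∞)^(t-r) * (J:ℝ≥0∞)^r := by
      rw [← ENNReal.rpow_add _ _ hJ0 hJtop, sub_add_cancel]
    rw [hsplit] at hk
    have hJr0 : (J:ℝ≥0∞)^r ≠ 0 := (ENNReal.rpow_pos (pos_iff_ne_zero.mpr hJ0) hJtop).ne'
    have hJrtop : (J:ℝ≥0∞)^r ≠ ∞ := ENNReal.rpow_ne_top_of_nonneg hr0 hJtop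
    have hk2 : (J:ℝ≥0∞)^(t-r) * K^t ≤ (C:ℝ≥0∞) := by
      rw [← ENNReal.mul_le_mul_iff_left hJr0 hJrtop]
      calc (J:ℝ≥0∞)^(t-r) * K^t * (J:ℝ≥0∞)^r
          = (J:ℝ≥0∞)^(t-r) * (J:ℝ≥0∞)^r * K^t := by ring
      _ ≤ (C:ℝ≥0∞) * (J:ℝ≥0∞)^r := hk
    have hto := ENNReal.toReal_mono ENNReal.coe_ne_top hk2
    rw [ENNReal.toReal_mul, ← ENNReal.toReal_rpow, ← ENNReal.toReal_rpow] at hto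
    rw [hKdef] at hto
    rw [ENNReal.toReal_natCast, ENNReal.toReal_ofReal (Real.rpow_nonneg hcApos.le _),
      ENNReal.coe_toReal] at hto
    exact hto
  have htr : 0 < t - r := by linarith
  set X : ℝ := ((C:ℝ)/κ + 1) ^ ((t - r)⁻¹) with hX
  have hXnn : 0 ≤ X := Real.rpow_nonneg (by positivity) _
  have hJ1 : 1 ≤ ⌈X⌉₊ + 1 := by omega
  have hJX : X ≤ ((⌈X⌉₊ + 1 : ℕ) : ℝ) := by
    calc X ≤ (⌈X⌉₊ : ℝ) := Nat.le_ceil X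
    _ ≤ _ := by push_cast; linarith
  have h1 : (C:ℝ)/κ + 1 ≤ (((⌈X⌉₊ + 1 : ℕ) : ℝ))^(t-r) := by
    calc (C:ℝ)/κ + 1 = X^(t-r) := (Real.rpow_inv_rpow (by positivity) htr.ne').symm
    _ ≤ _ := Real.rpow_le_rpow hXnn hJX htr.le
  have h2 := main (⌈X⌉₊ + 1) hJ1
  have h3 : ((C:ℝ)/κ + 1) * κ ≤ (C:ℝ) :=
    le_trans (mul_le_mul_of_nonneg_right h1 hκ.le) h2
  rw [add_mul, div_mul_cancel₀ _ hκ.ne', one_mul] at h3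
  linarith


end
end

section
/- Scaling necessity of $p_2\le p_1$ for $h^{p_1}\subset M_{p_2,q_2}^{s_2,\alpha}$: let $0<p_1<\infty$, $0<p_2,q_2\le\infty$, $s_2\in\mathbb{R}$, $\alpha\in[0,1)$. If $\|f\|_{M_{p_2,q_2}^{s_2,\alpha}}\le C\|f\|_{h^{p_1}}$ for all Schwartz $f$, then $1/p_2\le 1/p_1$. -/
open MeasureTheory SchwartzMap Metric Set Function
open scoped ENNReal NNReal FourierTransform SchwartzMap

noncomputable section

lemma finrank_En (n : ℕ) : Module.finrank ℝ (En n) = n := by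
  simp [finrank_euclideanSpace]

/-- Schwartz decay with japanese-bracket style weight. -/
lemma schwartz_decay (n : ℕ) (f : 𝓢(En n, ℂ)) (N : ℕ) :
    ∃ C > 0, ∀ x : En n, ‖f x‖ ≤ C * (1 + ‖x‖) ^ (-(N : ℝ)) := by
  set S : ℝ := 2 ^ N * (Finset.Iic ((N, 0) : ℕ × ℕ)).sup
      (fun m => SchwartzMap.seminorm ℝ m.1 m.2) f with hS
  refine ⟨max S 1, by positivity, fun x => ?_⟩
  have h1x : (0:ℝ) < 1 + ‖x‖ := by positivity
  have key : (1 + ‖x‖) ^ N * ‖f x‖ ≤ S := by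
    have := one_add_le_sup_seminorm_apply (𝕜 := ℝ) (m := ((N, 0) : ℕ × ℕ))
      (k := N) (n := 0) le_rfl le_rfl f x
    simpa [norm_iteratedFDeriv_zero] using this
  have : ‖f x‖ ≤ S * ((1 + ‖x‖) ^ N)⁻¹ := by
    rw [le_mul_inv_iff₀ (by positivity)]
    linarith [key]
  calc ‖f x‖ ≤ S * ((1 + ‖x‖) ^ N)⁻¹ := this
    _ ≤ max S 1 * (1 + ‖x‖) ^ (-(N : ℝ)) := by
        rw [Real.rpow_neg h1x.le, Real.rpow_natCast]
        gcongr
        exact le_max_left _ _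

/-- Peetre-type inequality. -/
lemma peetre (n : ℕ) (x y : En n) (r : ℝ) (hr : 0 ≤ r) :
    (1 + ‖x - y‖) ^ (-r) ≤ (1 + ‖x‖) ^ (-r) * (1 + ‖y‖) ^ r := by
  have hA : (0:ℝ) < 1 + ‖x - y‖ := by positivity
  have hB : (0:ℝ) < 1 + ‖y‖ := by positivity
  have hD : (0:ℝ) < 1 + ‖x‖ := by positivity
  have hDB : 1 + ‖x‖ ≤ (1 + ‖x - y‖) * (1 + ‖y‖) := by
    have : ‖x‖ ≤ ‖x - y‖ + ‖y‖ := by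
      simpa using norm_add_le (x - y) y
    nlinarith [norm_nonneg (x - y), norm_nonneg y, norm_nonneg x]
  have h1 : (1 + ‖x‖) / (1 + ‖y‖) ≤ 1 + ‖x - y‖ := by
    rw [div_le_iff₀ hB]; linarith
  have h2 : ((1 + ‖x‖) / (1 + ‖y‖)) ^ r ≤ (1 + ‖x - y‖) ^ r :=
    Real.rpow_le_rpow (by positivity) h1 hr
  rw [Real.div_rpow hD.le hB.le] at h2
  rw [Real.rpow_neg hA.le, Real.rpow_neg hD.le]
  have hpos : (0:ℝ) < (1 + ‖x - y‖) ^ r := Real.rpow_pos_of_pos hA _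
  rw [div_le_iff₀ (Real.rpow_pos_of_pos hB r)] at h2
  have hBpos : (0:ℝ) < (1 + ‖y‖) ^ r := Real.rpow_pos_of_pos hB _
  have hDpos : (0:ℝ) < (1 + ‖x‖) ^ r := Real.rpow_pos_of_pos hD _
  have : ((1 + ‖x - y‖) ^ r)⁻¹ ≤ ((1 + ‖x‖) ^ r)⁻¹ * (1 + ‖y‖) ^ r := by
    rw [inv_eq_one_div, inv_eq_one_div, div_mul_eq_mul_div, one_mul,
      div_le_div_iff₀ hpos hDpos]
    nlinarith [h2]
  simpa using this


/-- Weighted integrability of Schwartz functions. -/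
lemma schwartz_integrable_weight (n : ℕ) (f : 𝓢(En n, ℂ)) (N : ℕ) :
    Integrable (fun y : En n => (1 + ‖y‖) ^ (N : ℝ) * ‖f y‖) := by
  obtain ⟨C, hC, hCf⟩ := schwartz_decay n f (N + n + 1)
  have hmeas : AEStronglyMeasurable (fun y : En n => (1 + ‖y‖) ^ (N : ℝ) * ‖f y‖) volume := by
    apply Continuous.aestronglyMeasurable
    exact (Continuous.rpow_const (by continuity) (fun y => Or.inl (by positivity))).mul
      f.continuous.norm
  have hint : Integrable (fun y : En n => C * (1 + ‖y‖) ^ (-((n:ℝ) + 1))) := by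
    apply Integrable.const_mul
    apply integrable_one_add_norm (E := En n) (r := (n:ℝ) + 1)
    rw [finrank_En]; linarith
  apply hint.mono' hmeas
  filter_upwards with y
  have h1y : (0:ℝ) < 1 + ‖y‖ := by positivity
  have : |(1 + ‖y‖) ^ (N : ℝ) * ‖f y‖| = (1 + ‖y‖) ^ (N : ℝ) * ‖f y‖ := by
    apply abs_of_nonneg; positivity
  rw [Real.norm_eq_abs, this]
  calc (1 + ‖y‖) ^ (N : ℝ) * ‖f y‖
      ≤ (1 + ‖y‖) ^ (N : ℝ) * (C * (1 + ‖y‖) ^ (-((N:ℝ) + n + 1))) := by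
        have hfy : ‖f y‖ ≤ C * (1 + ‖y‖) ^ (-((N:ℝ) + n + 1)) := by
          have := hCf y
          convert this using 3
          push_cast; ring
        exact mul_le_mul_of_nonneg_left hfy (Real.rpow_nonneg h1y.le _)
    _ = C * (1 + ‖y‖) ^ (-((n:ℝ) + 1)) := by
        rw [mul_comm ((1 + ‖y‖) ^ (N : ℝ)) _, mul_assoc, ← Real.rpow_add h1y]
        ring_nf

/-- Dilation of a Schwartz function. -/
def dilSM {n : ℕ} (θ : ℝ) (hθ : θ ≠ 0) (f : 𝓢(En n, ℂ)) : 𝓢(En n, ℂ) :=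
  SchwartzMap.compCLMOfContinuousLinearEquiv ℝ
    (LinearEquiv.toContinuousLinearEquiv (LinearEquiv.smulOfNeZero ℝ (En n) θ hθ)) f

@[simp] lemma dilSM_apply {n : ℕ} (θ : ℝ) (hθ : θ ≠ 0) (f : 𝓢(En n, ℂ)) (x : En n) :
    dilSM θ hθ f x = f (θ • x) := rfl

open scoped RealInnerProductSpace in
lemma fourier_dilation {n : ℕ} (f : En n → ℂ) {θ : ℝ} (hθ : 0 < θ) (ξ : En n) :
    𝓕 (fun x => f (θ • x)) ξ = (θ ^ n)⁻¹ • 𝓕 f (θ⁻¹ • ξ) := by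
  calc 𝓕 (fun x => f (θ • x)) ξ
      = ∫ x : En n, (𝐞 (-⟪x, ξ⟫) : Circle) • f (θ • x) := Real.fourier_eq _ _
    _ = ∫ x : En n, (fun u => (𝐞 (-⟪θ⁻¹ • u, ξ⟫) : Circle) • f u) (θ • x) := by
        congr 1; ext x
        simp only [smul_smul, inv_mul_cancel₀ hθ.ne', one_smul]
    _ = |(θ ^ Module.finrank ℝ (En n))⁻¹| •
          ∫ u : En n, (𝐞 (-⟪θ⁻¹ • u, ξ⟫) : Circle) • f u :=
        MeasureTheory.Measure.integral_comp_smul (μ := (volume : Measure (En n)))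
          (fun u : En n => (𝐞 (-⟪θ⁻¹ • u, ξ⟫) : Circle) • f u) θ
    _ = (θ ^ n)⁻¹ • ∫ u : En n, (𝐞 (-⟪u, θ⁻¹ • ξ⟫) : Circle) • f u := by
        rw [finrank_En, abs_of_nonneg (by positivity)]
        simp_rw [real_inner_smul_left, ← real_inner_smul_right]
    _ = (θ ^ n)⁻¹ • 𝓕 f (θ⁻¹ • ξ) := by rw [Real.fourier_eq]
open scoped RealInnerProductSpace

/-- The rescaled frequency profile of `box P 0` applied to a dilated function. -/
def hfun {n : ℕ} {α : ℝ} (P : AlphaPartition n α) (f : 𝓢(En n, ℂ)) (l : ℝ) (v : En n) : ℂ :=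
  ∫ u : En n, (𝐞 ⟪u, v⟫ : Circle) • (P.η 0 (l • u) * 𝓕 (⇑f) u)

lemma box_dilSM {n : ℕ} {α : ℝ} (P : AlphaPartition n α) (f : 𝓢(En n, ℂ)) {l : ℝ}
    (hl : 0 < l) (x : En n) :
    box P 0 (⇑(dilSM l hl.ne' f)) x = hfun P f l (l • x) := by
  have hcoe : ⇑(dilSM l hl.ne' f) = fun x => f (l • x) := by
    funext x; exact dilSM_apply l hl.ne' f x
  have hF : 𝓕 (⇑(dilSM l hl.ne' f)) = fun ξ => (l ^ n)⁻¹ • 𝓕 (⇑f) (l⁻¹ • ξ) := by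
    funext ξ
    rw [hcoe, fourier_dilation (⇑f) hl ξ]
  set G : En n → ℂ := fun ξ => (𝐞 ⟪ξ, x⟫ : Circle) • (P.η 0 ξ * 𝓕 (⇑f) (l⁻¹ • ξ)) with hG
  have step1 : box P 0 (⇑(dilSM l hl.ne' f)) x = (l ^ n)⁻¹ • ∫ ξ : En n, G ξ := by
    rw [box, hF, Real.fourierInv_eq]
    rw [← integral_smul]
    congr 1
    funext ξ
    rw [hG]
    rw [mul_smul_comm, smul_comm]
  have step2 : ∫ u : En n, G (l • u) = |(l ^ Module.finrank ℝ (En n))⁻¹| • ∫ ξ : En n, G ξ :=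
    MeasureTheory.Measure.integral_comp_smul (μ := (volume : Measure (En n))) G l
  have habs : |(l ^ Module.finrank ℝ (En n))⁻¹| = (l ^ n)⁻¹ := by
    rw [finrank_En, abs_of_nonneg (by positivity)]
  have step3 : (l ^ n)⁻¹ • ∫ ξ : En n, G ξ = ∫ u : En n, G (l • u) := by
    rw [step2, habs]
  have step4 : ∫ u : En n, G (l • u) = hfun P f l (l • x) := by
    unfold hfun
    congr 1
    funext u
    rw [hG]
    simp only [smul_smul, inv_mul_cancel₀ hl.ne', one_smul]
    rw [real_inner_smul_left, ← real_inner_smul_right]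
  rw [step1, step3, step4]

lemma eta_bound {n : ℕ} {α : ℝ} (P : AlphaPartition n α) :
    ∃ C0 > 0, ∀ k ξ, ‖P.η k ξ‖ ≤ C0 := by
  obtain ⟨C0, hC0, hb⟩ := P.deriv_bound 0
  refine ⟨C0, hC0, fun k ξ => ?_⟩
  have := hb k ξ
  simpa [norm_iteratedFDeriv_zero, Real.rpow_zero] using this

lemma integrable_char_smul {n : ℕ} {g : En n → ℂ} (hg : Continuous g) {C0 : ℝ}
    (hb : ∀ u, ‖g u‖ ≤ C0) (f2 : 𝓢(En n, ℂ)) (v : En n) :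
    Integrable (fun u : En n => (𝐞 ⟪u, v⟫ : Circle) • (g u * f2 u)) := by
  have hcont : Continuous fun u : En n => (𝐞 ⟪u, v⟫ : Circle) • (g u * f2 u) := by
    apply Continuous.smul
    · exact continuous_subtype_val.comp (Real.continuous_fourierChar.comp ((continuous_id (X := En n)).inner (𝕜 := ℝ) (continuous_const (y := v))))
    · exact hg.mul f2.continuous
  apply Integrable.mono' ((f2.integrable (μ := volume)).norm.const_mul C0)
    hcont.aestronglyMeasurable
  filter_upwards with u
  rw [Circle.norm_smul, norm_mul]
  exact mul_le_mul_of_nonneg_right (hb u) (norm_nonneg _)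

lemma hfun_sub_bound {n : ℕ} {α : ℝ} (P : AlphaPartition n α) (f : 𝓢(En n, ℂ)) (l : ℝ) (v : En n) :
    ‖hfun P f l v - P.η 0 0 * f v‖ ≤
      ∫ u : En n, ‖P.η 0 (l • u) - P.η 0 0‖ * ‖𝓕 (⇑f) u‖ := by
  obtain ⟨C0, hC0, hb⟩ := eta_bound P
  set f2 : 𝓢(En n, ℂ) := 𝓕 f with hf2
  have hf2coe : 𝓕 (⇑f) = ⇑f2 := rfl
  have hcont0 : Continuous fun u : En n => P.η 0 (l • u) :=
    (P.smooth 0).continuous.comp ((continuous_const (y := l)).smul continuous_id)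
  have hI1 : Integrable (fun u : En n => (𝐞 ⟪u, v⟫ : Circle) • (P.η 0 (l • u) * f2 u)) :=
    integrable_char_smul hcont0 (fun u => hb 0 _) f2 v
  have hI2 : Integrable (fun u : En n => (𝐞 ⟪u, v⟫ : Circle) • ((P.η 0 0 : ℂ) * f2 u)) :=
    integrable_char_smul continuous_const (fun _ => hb 0 0) f2 v
  have hinv : f v = ∫ u : En n, (𝐞 ⟪u, v⟫ : Circle) • (𝓕 (⇑f)) u := by
    rw [← Real.fourierInv_eq]
    exact (congrFun (Continuous.fourierInv_fourier_eq f.continuous (f.integrable)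
      (by rw [hf2coe]; exact f2.integrable)) v).symm
  have heq : hfun P f l v - P.η 0 0 * f v =
      ∫ u : En n, (𝐞 ⟪u, v⟫ : Circle) • ((P.η 0 (l • u) - P.η 0 0) * 𝓕 (⇑f) u) := by
    rw [hinv, hfun]
    rw [← integral_const_mul]
    rw [hf2coe, ← integral_sub hI1]
    · congr 1
      funext u
      simp only [Circle.smul_def, smul_eq_mul]
      ring
    · have : (fun u : En n => P.η 0 0 * ((𝐞 ⟪u, v⟫ : Circle) • f2 u)) =
          fun u : En n => (𝐞 ⟪u, v⟫ : Circle) • ((P.η 0 0 : ℂ) * f2 u) := by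
        funext u
        simp only [Circle.smul_def, smul_eq_mul]
        ring
      rw [this]
      exact hI2
  rw [heq]
  refine (norm_integral_le_integral_norm _).trans (le_of_eq ?_)
  congr 1
  funext u
  rw [Circle.norm_smul, norm_mul]

lemma D_tendsto {n : ℕ} {α : ℝ} (P : AlphaPartition n α) (f : 𝓢(En n, ℂ)) :
    Filter.Tendsto (fun l : ℝ => ∫ u : En n, ‖P.η 0 (l • u) - P.η 0 0‖ * ‖𝓕 (⇑f) u‖)
      (nhdsWithin 0 (Set.Ioi 0)) (nhds 0) := by
  obtain ⟨C0, hC0, hb⟩ := eta_bound P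
  set f2 : 𝓢(En n, ℂ) := 𝓕 f with hf2
  have hf2coe : 𝓕 (⇑f) = ⇑f2 := rfl
  have key := tendsto_integral_filter_of_dominated_convergence
    (μ := (volume : Measure (En n))) (l := nhdsWithin (0:ℝ) (Set.Ioi 0))
    (F := fun (l : ℝ) (u : En n) => ‖P.η 0 (l • u) - P.η 0 0‖ * ‖𝓕 (⇑f) u‖)
    (f := fun _ : En n => (0:ℝ)) (bound := fun u : En n => (2 * C0) * ‖𝓕 (⇑f) u‖)
    ?_ ?_ ?_ ?_
  · simpa using key
  · filter_upwards with l
    apply Continuous.aestronglyMeasurable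
    apply Continuous.mul
    · exact (((P.smooth 0).continuous.comp ((continuous_const (y := l)).smul continuous_id)).sub
        continuous_const).norm
    · rw [hf2coe]; exact f2.continuous.norm
  · filter_upwards with l
    filter_upwards with u
    rw [Real.norm_eq_abs, abs_of_nonneg (by positivity)]
    have : ‖P.η 0 (l • u) - P.η 0 0‖ ≤ 2 * C0 := by
      calc ‖P.η 0 (l • u) - P.η 0 0‖ ≤ ‖P.η 0 (l • u)‖ + ‖P.η 0 0‖ := norm_sub_le _ _
        _ ≤ 2 * C0 := by have := hb 0 (l • u); have := hb 0 0; linarith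
    exact mul_le_mul_of_nonneg_right this (norm_nonneg _)
  · rw [hf2coe]
    exact (f2.integrable (μ := volume)).norm.const_mul (2 * C0)
  · filter_upwards with u
    have h1 : Filter.Tendsto (fun l : ℝ => l • u) (nhdsWithin 0 (Set.Ioi 0)) (nhds 0) := by
      have : Filter.Tendsto (fun l : ℝ => l • u) (nhds 0) (nhds ((0:ℝ) • u)) :=
        (continuous_id.smul continuous_const).tendsto 0
      rw [zero_smul] at this
      exact this.mono_left nhdsWithin_le_nhds
    have h2 : Filter.Tendsto (fun l : ℝ => ‖P.η 0 (l • u) - P.η 0 0‖)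
        (nhdsWithin 0 (Set.Ioi 0)) (nhds 0) := by
      have := ((P.smooth 0).continuous.tendsto 0).comp h1
      have h3 := (this.sub (tendsto_const_nhds (x := P.η 0 0))).norm
      simpa using h3
    have := h2.mul_const ‖𝓕 (⇑f) u‖
    simpa using this

lemma eLpNorm_lower {n : ℕ} (g : En n → ℂ) {p : ℝ≥0∞} (hp0 : p ≠ 0) (hpt : p ≠ ∞)
    {S : Set (En n)} (hS : MeasurableSet S) {c : ℝ}
    (hg : ∀ x ∈ S, c ≤ ‖g x‖) :
    ENNReal.ofReal c * (volume S) ^ (1 / p.toReal) ≤ eLpNorm g p volume := by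
  have hb : 0 < p.toReal := ENNReal.toReal_pos hp0 hpt
  rw [eLpNorm_eq_lintegral_rpow_enorm_toReal hp0 hpt]
  have h1 : (ENNReal.ofReal c) ^ p.toReal * volume S
      ≤ ∫⁻ x, (‖g x‖₊ : ℝ≥0∞) ^ p.toReal := by
    calc (ENNReal.ofReal c) ^ p.toReal * volume S
        = ∫⁻ _ in S, (ENNReal.ofReal c) ^ p.toReal ∂volume := by
          rw [setLIntegral_const]
      _ ≤ ∫⁻ x in S, (‖g x‖₊ : ℝ≥0∞) ^ p.toReal ∂volume := by
          apply lintegral_mono_ae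
          filter_upwards [ae_restrict_of_forall_mem hS hg] with x hx
          apply ENNReal.rpow_le_rpow _ hb.le
          rw [← enorm_eq_nnnorm, ← ofReal_norm]
          exact ENNReal.ofReal_le_ofReal hx
      _ ≤ ∫⁻ x, (‖g x‖₊ : ℝ≥0∞) ^ p.toReal ∂volume := setLIntegral_le_lintegral _ _
  have h2 := ENNReal.rpow_le_rpow h1 (by positivity : (0:ℝ) ≤ 1 / p.toReal)
  refine le_trans (le_of_eq ?_) h2
  rw [ENNReal.mul_rpow_of_nonneg _ _ (by positivity : (0:ℝ) ≤ 1 / p.toReal)]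
  rw [← ENNReal.rpow_mul, mul_one_div_cancel hb.ne', ENNReal.rpow_one]

lemma jb_zero (n : ℕ) : jb (0 : Fin n → ℤ) = 1 := by
  have : (1 + ∑ i : Fin n, (((0 : Fin n → ℤ) i : ℝ)) ^ 2) = 1 := by simp
  rw [jb, this, Real.one_rpow]

lemma MN_ge_box_zero {n : ℕ} {α : ℝ} (P : AlphaPartition n α) {p q : ℝ≥0∞} (hq : q ≠ 0)
    (s : ℝ) (f : En n → ℂ) :
    eLpNorm (box P 0 f) p volume ≤ MN P p q s f := by
  have hw : ENNReal.ofReal (jb (0 : Fin n → ℤ) ^ (s / (1 - α))) = 1 := by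
    rw [jb_zero, Real.one_rpow, ENNReal.ofReal_one]
  unfold MN
  split_ifs with hqtop
  · refine le_trans ?_ (le_iSup _ (0 : Fin n → ℤ))
    rw [hw, one_mul]
  · have hqt : 0 < q.toReal := ENNReal.toReal_pos hq hqtop
    calc eLpNorm (box P 0 f) p volume
        = (eLpNorm (box P 0 f) p volume ^ q.toReal) ^ (1 / q.toReal) := by
          rw [← ENNReal.rpow_mul, mul_one_div_cancel hqt.ne', ENNReal.rpow_one]
      _ ≤ _ := by
          apply ENNReal.rpow_le_rpow _ (by positivity)
          refine le_trans (le_of_eq ?_) (ENNReal.le_tsum (0 : Fin n → ℤ))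
          rw [hw, ENNReal.one_rpow, one_mul]

lemma maximal_bound {n : ℕ} (ψ : 𝓢(En n, ℂ)) (N : ℕ) :
    ∃ K ≥ (0:ℝ), ∀ {l : ℝ}, 0 < l → l ≤ 1 → ∀ x : En n, ∀ t ∈ Set.Ioo (0:ℝ) 1,
      ‖∫ y : En n, ((t ^ (-(n : ℝ)) : ℝ) : ℂ) * ψ (t⁻¹ • y) * ψ (l • (x - y))‖
        ≤ K * (1 + ‖l • x‖) ^ (-(N : ℝ)) := by
  obtain ⟨Cψ, hCψ, hdec⟩ := schwartz_decay n ψ N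
  have hW : Integrable (fun y : En n => (1 + ‖y‖) ^ (N : ℝ) * ‖ψ y‖) :=
    schwartz_integrable_weight n ψ N
  set W : En n → ℝ := fun y => (1 + ‖y‖) ^ (N : ℝ) * ‖ψ y‖ with hWdef
  set AW : ℝ := ∫ y : En n, W y with hAW
  have hAWnn : 0 ≤ AW := integral_nonneg (fun y => by positivity)
  refine ⟨Cψ * AW, by positivity, ?_⟩
  intro l hl hl1 x t ht
  obtain ⟨ht0, ht1⟩ := ht
  set c : ℝ := Cψ * (1 + ‖l • x‖) ^ (-(N : ℝ)) with hc
  have hcnn : 0 ≤ c := by positivity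
  set G : En n → ℝ := fun y => (t ^ n)⁻¹ * c * W (t⁻¹ • y) with hG
  have hGint : Integrable G := by
    apply Integrable.const_mul
    exact hW.comp_smul (inv_ne_zero ht0.ne')
  have hptw : ∀ y : En n,
      ‖((t ^ (-(n : ℝ)) : ℝ) : ℂ) * ψ (t⁻¹ • y) * ψ (l • (x - y))‖ ≤ G y := by
    intro y
    rw [norm_mul, norm_mul, Complex.norm_real]
    have htn : ‖(t ^ (-(n : ℝ)) : ℝ)‖ = (t ^ n)⁻¹ := by
      rw [Real.norm_eq_abs, abs_of_nonneg (Real.rpow_nonneg ht0.le _),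
        Real.rpow_neg ht0.le, Real.rpow_natCast]
    have hxy : ‖ψ (l • (x - y))‖ ≤ c * (1 + ‖t⁻¹ • y‖) ^ (N : ℝ) := by
      have h1 : ‖ψ (l • (x - y))‖ ≤ Cψ * (1 + ‖l • x - l • y‖) ^ (-(N : ℝ)) := by
        rw [← smul_sub]; exact hdec _
      have h2 : (1 + ‖l • x - l • y‖) ^ (-(N : ℝ)) ≤
          (1 + ‖l • x‖) ^ (-(N : ℝ)) * (1 + ‖l • y‖) ^ (N : ℝ) :=
        peetre n (l • x) (l • y) (N : ℝ) (by positivity)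
      have h3 : (1 + ‖l • y‖) ^ (N : ℝ) ≤ (1 + ‖t⁻¹ • y‖) ^ (N : ℝ) := by
        apply Real.rpow_le_rpow (by positivity) _ (by positivity)
        have e1 : ‖l • y‖ ≤ ‖y‖ := by
          rw [norm_smul, Real.norm_eq_abs, abs_of_nonneg hl.le]
          nlinarith [norm_nonneg y]
        have e2 : ‖y‖ ≤ ‖t⁻¹ • y‖ := by
          rw [norm_smul, Real.norm_eq_abs, abs_of_nonneg (by positivity : (0:ℝ) ≤ t⁻¹)]
          nlinarith [norm_nonneg y, (one_le_inv_iff₀.mpr ⟨ht0, ht1.le⟩ : 1 ≤ t⁻¹)]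
        linarith
      calc ‖ψ (l • (x - y))‖ ≤ Cψ * (1 + ‖l • x - l • y‖) ^ (-(N : ℝ)) := h1
        _ ≤ Cψ * ((1 + ‖l • x‖) ^ (-(N : ℝ)) * (1 + ‖l • y‖) ^ (N : ℝ)) := by
            exact mul_le_mul_of_nonneg_left h2 hCψ.le
        _ = c * (1 + ‖l • y‖) ^ (N : ℝ) := by rw [hc]; ring
        _ ≤ c * (1 + ‖t⁻¹ • y‖) ^ (N : ℝ) := mul_le_mul_of_nonneg_left h3 hcnn
    calc ‖(t ^ (-(n : ℝ)) : ℝ)‖ * ‖ψ (t⁻¹ • y)‖ * ‖ψ (l • (x - y))‖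
        ≤ (t ^ n)⁻¹ * ‖ψ (t⁻¹ • y)‖ * (c * (1 + ‖t⁻¹ • y‖) ^ (N : ℝ)) := by
          rw [htn]
          exact mul_le_mul_of_nonneg_left hxy (by positivity)
      _ = G y := by rw [hG, hWdef]; ring
  have hnormle : ‖∫ y : En n, ((t ^ (-(n : ℝ)) : ℝ) : ℂ) * ψ (t⁻¹ • y) * ψ (l • (x - y))‖
      ≤ ∫ y : En n, G y := by
    refine (norm_integral_le_integral_norm _).trans ?_
    apply integral_mono_of_nonneg (Filter.Eventually.of_forall (fun y => norm_nonneg _))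
      hGint (Filter.Eventually.of_forall hptw)
  have hGval : ∫ y : En n, G y = c * AW := by
    rw [hG]
    rw [integral_const_mul]
    rw [MeasureTheory.Measure.integral_comp_inv_smul_of_nonneg
      (μ := (volume : Measure (En n))) W ht0.le]
    rw [finrank_En]
    simp only [smul_eq_mul, hAW]
    field_simp
  rw [hGval] at hnormle
  calc ‖∫ y : En n, ((t ^ (-(n : ℝ)) : ℝ) : ℂ) * ψ (t⁻¹ • y) * ψ (l • (x - y))‖
      ≤ c * AW := hnormle
    _ = Cψ * AW * (1 + ‖l • x‖) ^ (-(N : ℝ)) := by rw [hc]; ring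

lemma hpN_upper {n : ℕ} (hn : 0 < n) (ψ : 𝓢(En n, ℂ)) {p : ℝ≥0∞} (hp0 : p ≠ 0) (hpt : p ≠ ∞) :
    ∃ K' ≥ (0:ℝ), ∀ {l : ℝ}, 0 < l → l ≤ 1 →
      hpN ψ p (fun z : En n => ψ (l • z)) ≤
        ENNReal.ofReal (K' * l ^ (-((n : ℝ) / p.toReal))) := by
  have ha : 0 < p.toReal := ENNReal.toReal_pos hp0 hpt
  set a : ℝ := p.toReal with haa
  obtain ⟨N, hN⟩ := exists_nat_gt ((n : ℝ) / a)
  have hNa : (n : ℝ) < (N : ℝ) * a := by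
    rw [div_lt_iff₀ ha] at hN; linarith
  obtain ⟨K, hK, hKb⟩ := maximal_bound ψ N
  set g : En n → ℝ := fun u => (1 + ‖u‖) ^ (-((N : ℝ) * a)) with hg
  have hgint : Integrable g := by
    apply integrable_one_add_norm (E := En n) (r := (N : ℝ) * a)
    rw [finrank_En]; exact hNa
  set Ig : ℝ := ∫ u : En n, g u with hIg
  have hIgnn : 0 ≤ Ig := integral_nonneg (fun u => by positivity)
  refine ⟨K * Ig ^ (1 / a), by positivity, ?_⟩
  intro l hl hl1
  have hsup : ∀ x : En n,
      (⨆ t ∈ Set.Ioo (0 : ℝ) 1,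
        (‖∫ y, ((t ^ (-(n : ℝ)) : ℝ) : ℂ) * ψ (t⁻¹ • y) * ψ (l • (x - y))‖₊ : ℝ≥0∞))
      ≤ ENNReal.ofReal (K * (1 + ‖l • x‖) ^ (-(N : ℝ))) := by
    intro x
    apply iSup₂_le
    intro t ht
    rw [← enorm_eq_nnnorm, ← ofReal_norm]
    exact ENNReal.ofReal_le_ofReal (hKb hl hl1 x t ht)
  have hlint : (∫⁻ x : En n,
      (⨆ t ∈ Set.Ioo (0 : ℝ) 1,
        (‖∫ y, ((t ^ (-(n : ℝ)) : ℝ) : ℂ) * ψ (t⁻¹ • y) * ψ (l • (x - y))‖₊ : ℝ≥0∞)) ^ a)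
      ≤ ENNReal.ofReal (K ^ a) * ENNReal.ofReal ((l ^ n)⁻¹ * Ig) := by
    have step1 : ∀ x : En n,
        (⨆ t ∈ Set.Ioo (0 : ℝ) 1,
          (‖∫ y, ((t ^ (-(n : ℝ)) : ℝ) : ℂ) * ψ (t⁻¹ • y) * ψ (l • (x - y))‖₊ : ℝ≥0∞)) ^ a
        ≤ ENNReal.ofReal (K ^ a) * ENNReal.ofReal (g (l • x)) := by
      intro x
      calc (⨆ t ∈ Set.Ioo (0 : ℝ) 1,
          (‖∫ y, ((t ^ (-(n : ℝ)) : ℝ) : ℂ) * ψ (t⁻¹ • y) * ψ (l • (x - y))‖₊ : ℝ≥0∞)) ^ a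
          ≤ (ENNReal.ofReal (K * (1 + ‖l • x‖) ^ (-(N : ℝ)))) ^ a :=
            ENNReal.rpow_le_rpow (hsup x) ha.le
        _ = ENNReal.ofReal ((K * (1 + ‖l • x‖) ^ (-(N : ℝ))) ^ a) :=
            ENNReal.ofReal_rpow_of_nonneg (by positivity) ha.le
        _ = ENNReal.ofReal (K ^ a) * ENNReal.ofReal (g (l • x)) := by
            rw [← ENNReal.ofReal_mul (by positivity)]
            congr 1
            rw [Real.mul_rpow hK (by positivity), hg]
            congr 1
            rw [← Real.rpow_mul (by positivity : (0:ℝ) ≤ 1 + ‖l • x‖)]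
            congr 1
            ring
    calc (∫⁻ x : En n,
        (⨆ t ∈ Set.Ioo (0 : ℝ) 1,
          (‖∫ y, ((t ^ (-(n : ℝ)) : ℝ) : ℂ) * ψ (t⁻¹ • y) * ψ (l • (x - y))‖₊ : ℝ≥0∞)) ^ a)
        ≤ ∫⁻ x : En n, ENNReal.ofReal (K ^ a) * ENNReal.ofReal (g (l • x)) :=
          lintegral_mono step1
      _ = ENNReal.ofReal (K ^ a) * ∫⁻ x : En n, ENNReal.ofReal (g (l • x)) :=
          lintegral_const_mul' _ _ ENNReal.ofReal_ne_top
      _ = ENNReal.ofReal (K ^ a) * ENNReal.ofReal ((l ^ n)⁻¹ * Ig) := by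
          congr 1
          have hcomp : Integrable (fun x : En n => g (l • x)) :=
            hgint.comp_smul hl.ne'
          rw [← MeasureTheory.ofReal_integral_eq_lintegral_ofReal hcomp
            (Filter.Eventually.of_forall (fun x => by positivity))]
          congr 1
          rw [MeasureTheory.Measure.integral_comp_smul (μ := (volume : Measure (En n))) g l]
          rw [finrank_En, abs_of_nonneg (by positivity), smul_eq_mul, hIg]
  -- now conclude
  have hhpN : hpN ψ p (fun z : En n => ψ (l • z)) ≤
      (ENNReal.ofReal (K ^ a) * ENNReal.ofReal ((l ^ n)⁻¹ * Ig)) ^ (1 / a) := by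
    rw [hpN]
    exact ENNReal.rpow_le_rpow hlint (by positivity)
  refine hhpN.trans (le_of_eq ?_)
  rw [← ENNReal.ofReal_mul (by positivity)]
  rw [ENNReal.ofReal_rpow_of_nonneg (by positivity) (by positivity)]
  congr 1
  have hKa : (K ^ a) ^ (1/a) = K := by
    rw [← Real.rpow_mul hK, mul_one_div_cancel ha.ne', Real.rpow_one]
  have hln : ((l ^ n)⁻¹ : ℝ) ^ (1/a) = l ^ (-((n:ℝ)/a)) := by
    rw [← Real.rpow_natCast l n, ← Real.rpow_neg hl.le, ← Real.rpow_mul hl.le]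
    congr 1; ring
  rw [Real.mul_rpow (by positivity) (by positivity), hKa,
    Real.mul_rpow (by positivity) (by positivity), hln]
  ring

/-- scaling necessity of `p₂ ≤ p₁` for `h^{p₁} ⊂ M_{p₂,q₂}^{s₂,α}`:
the norm inequality on Schwartz functions forces `1/p₂ ≤ 1/p₁`. -/
theorem hp_embedding_forces_p2_le_p1 (n : ℕ) (hn : 0 < n) (p₁ p₂ q₂ : ℝ≥0∞) (hp₁ : 0 < p₁)
    (hp₁' : p₁ < ∞) (hp₂ : 0 < p₂) (hq₂ : 0 < q₂) (s₂ α : ℝ) (hα : 0 ≤ α) (hα1 : α < 1)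
    (P : AlphaPartition n α) (ψ : 𝓢(En n, ℂ)) (hψ : (∫ x : En n, ψ x) ≠ 0) (C : ℝ≥0)
    (h : ∀ f : 𝓢(En n, ℂ), MN P p₂ q₂ s₂ f ≤ C * hpN ψ p₁ (f : En n → ℂ)) :
    p₂⁻¹ ≤ p₁⁻¹ := by
  by_cases hp2top : p₂ = ∞
  · simp [hp2top]
  rw [ENNReal.inv_le_inv]
  by_contra hcon
  push_neg at hcon
  have hp1ne : p₁ ≠ ∞ := hp₁'.ne
  set a : ℝ := p₁.toReal with haa
  set b : ℝ := p₂.toReal with hbb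
  have ha : 0 < a := ENNReal.toReal_pos hp₁.ne' hp1ne
  have hb : 0 < b := ENNReal.toReal_pos hp₂.ne' hp2top
  have hba : b < a := (ENNReal.toReal_lt_toReal hp2top hp1ne).mpr hcon
  set e : ℝ := (n : ℝ) / b - (n : ℝ) / a with hee
  have he : 0 < e := by
    have : (n : ℝ) / a < (n : ℝ) / b :=
      div_lt_div_of_pos_left (by exact_mod_cast hn) hb hba
    simp only [hee]; linarith
  -- a point where ψ is nonzero
  have hv₀' : ∃ v₀ : En n, ψ v₀ ≠ 0 := by
    by_contra hall
    push_neg at hall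
    exact hψ (by simp [hall])
  obtain ⟨v₀, hv₀⟩ := hv₀'
  set ε : ℝ := ‖ψ v₀‖ with hεdef
  have hεpos : 0 < ε := norm_pos_iff.mpr hv₀
  obtain ⟨δ, hδpos, hδ⟩ : ∃ δ > 0, ∀ v : En n, dist v v₀ < δ → ε / 2 ≤ ‖ψ v‖ := by
    obtain ⟨δ, hδpos, hδ⟩ := Metric.continuousAt_iff.mp ψ.continuous.continuousAt (ε / 2)
      (by positivity)
    refine ⟨δ, hδpos, fun v hv => ?_⟩
    have h1 := hδ hv
    rw [dist_eq_norm] at h1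
    have h3 := norm_sub_norm_le (ψ v₀) (ψ v)
    rw [norm_sub_rev] at h3
    linarith
  -- η₀ is at least 1 at the origin
  have hη0 : 1 ≤ ‖P.η 0 0‖ := by
    apply P.lower 0 0
    have hkv : kv (0 : Fin n → ℤ) = (0 : En n) := by
      ext i; simp [kv]
    have hcen : cen α (0 : Fin n → ℤ) = 0 := by rw [cen, hkv, smul_zero]
    have hscl : scl α (0 : Fin n → ℤ) = 1 := by rw [scl, jb_zero, Real.one_rpow]
    rw [hcen, hscl, mul_one]
    exact Metric.mem_ball_self P.c₀_pos
  -- upper bound on hpN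
  obtain ⟨K', hK'nn, hK'⟩ := hpN_upper hn ψ hp₁.ne' hp1ne
  -- volume constants
  haveI : Nontrivial (En n) :=
    Module.nontrivial_of_finrank_pos (R := ℝ) (by rw [finrank_En]; exact hn)
  set B1 : ℝ≥0∞ := volume (Metric.ball (0 : En n) 1) with hB1def
  have hB1pos : 0 < B1 := Metric.measure_ball_pos _ _ one_pos
  have hB1ne : B1 ≠ ∞ := (measure_ball_lt_top).ne
  set B1r : ℝ := B1.toReal with hB1rdef
  have hB1r : 0 < B1r := ENNReal.toReal_pos hB1pos.ne' hB1ne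
  set c₂ : ℝ := (ε / 4) * (δ ^ ((n : ℝ) / b) * B1r ^ (1 / b)) with hc₂
  have hc₂pos : 0 < c₂ := by
    have : (0:ℝ) < δ ^ ((n : ℝ) / b) := Real.rpow_pos_of_pos hδpos _
    have : (0:ℝ) < B1r ^ (1 / b) := Real.rpow_pos_of_pos hB1r _
    positivity
  set c₃ : ℝ := (C : ℝ) * K' with hc₃
  have hc₃nn : 0 ≤ c₃ := by positivity
  -- the eventual statements
  set L := nhdsWithin (0 : ℝ) (Set.Ioi 0) with hL
  have ev0 : ∀ᶠ l in L, 0 < l := eventually_mem_nhdsWithin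
  have ev1 : ∀ᶠ l in L, l < 1 :=
    (eventually_lt_nhds one_pos).filter_mono nhdsWithin_le_nhds
  have ev2 : ∀ᶠ l in L,
      (∫ u : En n, ‖P.η 0 (l • u) - P.η 0 0‖ * ‖𝓕 (⇑ψ) u‖) < ε / 4 :=
    (D_tendsto P ψ).eventually_lt_const (by positivity)
  have ev3 : ∀ᶠ l in L, c₃ * l ^ e < c₂ := by
    have h1 : Filter.Tendsto (fun l : ℝ => l ^ e) (nhds 0) (nhds 0) := by
      have := (Real.continuousAt_rpow_const 0 e (Or.inr he.le)).tendsto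
      rwa [Real.zero_rpow he.ne'] at this
    have h2 : Filter.Tendsto (fun l : ℝ => c₃ * l ^ e) L (nhds (c₃ * 0)) :=
      (h1.mono_left nhdsWithin_le_nhds).const_mul c₃
    rw [mul_zero] at h2
    exact h2.eventually_lt_const hc₂pos
  obtain ⟨l, hl0, hl1, hD, hfin⟩ := (ev0.and (ev1.and (ev2.and ev3))).exists
  -- the dilated test function
  set fL : 𝓢(En n, ℂ) := dilSM l hl0.ne' ψ with hfL
  have hcoe : ⇑fL = fun z : En n => ψ (l • z) := by
    funext z; exact dilSM_apply l hl0.ne' ψ z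
  -- lower bound for box on the rescaled ball
  set S : Set (En n) := Metric.ball (l⁻¹ • v₀) (l⁻¹ * δ) with hS
  have hSbox : ∀ x ∈ S, ε / 4 ≤ ‖box P 0 (⇑fL) x‖ := by
    intro x hx
    have hmem : dist (l • x) v₀ < δ := by
      have hd : l • x - v₀ = l • (x - l⁻¹ • v₀) := by
        rw [smul_sub, smul_smul, mul_inv_cancel₀ hl0.ne', one_smul]
      rw [dist_eq_norm, hd, norm_smul, Real.norm_eq_abs, abs_of_pos hl0]
      have hx' : ‖x - l⁻¹ • v₀‖ < l⁻¹ * δ := by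
        rw [hS] at hx
        rw [Metric.mem_ball, dist_eq_norm] at hx
        exact hx
      calc l * ‖x - l⁻¹ • v₀‖ < l * (l⁻¹ * δ) := by
            exact mul_lt_mul_of_pos_left hx' hl0
        _ = δ := by field_simp
    have hψl : ε / 2 ≤ ‖ψ (l • x)‖ := hδ _ hmem
    rw [hfL, box_dilSM P ψ hl0 x]
    have h1 : ‖hfun P ψ l (l • x) - P.η 0 0 * ψ (l • x)‖ ≤
        ∫ u : En n, ‖P.η 0 (l • u) - P.η 0 0‖ * ‖𝓕 (⇑ψ) u‖ := hfun_sub_bound P ψ l (l • x)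
    have h2 : ε / 2 ≤ ‖P.η 0 0 * ψ (l • x)‖ := by
      rw [norm_mul]
      nlinarith
    have h3 := norm_sub_norm_le (P.η 0 0 * ψ (l • x)) (hfun P ψ l (l • x))
    rw [norm_sub_rev] at h3
    linarith
  have hLB : ENNReal.ofReal (ε / 4) * (volume S) ^ (1 / b) ≤
      eLpNorm (box P 0 (⇑fL)) p₂ volume :=
    eLpNorm_lower _ hp₂.ne' hp2top measurableSet_ball hSbox
  -- compute the volume of S
  have hvolS : volume S = ENNReal.ofReal ((l⁻¹ * δ) ^ n) * B1 := by
    rw [hS, MeasureTheory.Measure.addHaar_ball (volume : Measure (En n)) _ (by positivity),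
      finrank_En, hB1def]
  -- the rpow of the volume
  have hq1 : ((l⁻¹ * δ) ^ n : ℝ) ^ (1 / b) = δ ^ ((n : ℝ) / b) * l ^ (-((n : ℝ) / b)) := by
    rw [mul_pow, Real.mul_rpow (by positivity) (by positivity)]
    have e1 : ((l⁻¹ : ℝ) ^ n) ^ (1 / b) = l ^ (-((n : ℝ) / b)) := by
      rw [← Real.rpow_natCast (l⁻¹) n, ← Real.rpow_mul (by positivity),
        Real.inv_rpow hl0.le, ← Real.rpow_neg hl0.le]
      congr 1; field_simp
    have e2 : ((δ : ℝ) ^ n) ^ (1 / b) = δ ^ ((n : ℝ) / b) := by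
      rw [← Real.rpow_natCast δ n, ← Real.rpow_mul hδpos.le]
      congr 1; field_simp
    rw [e1, e2]
    ring
  have hvolS' : (volume S) ^ (1 / b) =
      ENNReal.ofReal (δ ^ ((n : ℝ) / b) * l ^ (-((n : ℝ) / b)) * B1r ^ (1 / b)) := by
    rw [hvolS, ENNReal.mul_rpow_of_nonneg _ _ (by positivity : (0:ℝ) ≤ 1 / b),
      ENNReal.ofReal_rpow_of_nonneg (by positivity) (by positivity), hq1]
    have : B1 = ENNReal.ofReal B1r := (ENNReal.ofReal_toReal hB1ne).symm
    rw [this, ENNReal.ofReal_rpow_of_nonneg hB1r.le (by positivity),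
      ← ENNReal.ofReal_mul (by positivity)]
  -- assemble lower bound on MN
  have hMNlow : ENNReal.ofReal (c₂ * l ^ (-((n : ℝ) / b))) ≤ MN P p₂ q₂ s₂ (⇑fL) := by
    refine le_trans ?_ (MN_ge_box_zero P hq₂.ne' s₂ (⇑fL))
    refine le_trans ?_ hLB
    rw [hvolS', ← ENNReal.ofReal_mul (by positivity)]
    apply ENNReal.ofReal_le_ofReal
    rw [hc₂]
    ring_nf
    exact le_of_eq rfl
  -- upper bound on MN
  have hMNup : MN P p₂ q₂ s₂ (⇑fL) ≤ ENNReal.ofReal (c₃ * (l ^ (-((n : ℝ) / a)))) := by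
    refine (h fL).trans ?_
    have hhp : hpN ψ p₁ (⇑fL) ≤ ENNReal.ofReal (K' * l ^ (-((n : ℝ) / a))) := by
      rw [hcoe]
      exact hK' hl0 hl1.le
    calc (C : ℝ≥0∞) * hpN ψ p₁ (⇑fL)
        ≤ (C : ℝ≥0∞) * ENNReal.ofReal (K' * l ^ (-((n : ℝ) / a))) := by
          exact mul_le_mul_right hhp _
      _ = ENNReal.ofReal (c₃ * (l ^ (-((n : ℝ) / a)))) := by
          rw [← ENNReal.ofReal_coe_nnreal, ← ENNReal.ofReal_mul (by positivity), hc₃]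
          ring_nf
  -- combine into a real inequality
  have hcomb := hMNlow.trans hMNup
  rw [ENNReal.ofReal_le_ofReal_iff (by positivity)] at hcomb
  -- multiply both sides by l ^ (n / b)
  have hmul := mul_le_mul_of_nonneg_right hcomb
    (Real.rpow_nonneg hl0.le ((n : ℝ) / b))
  rw [mul_assoc, ← Real.rpow_add hl0, neg_add_cancel, Real.rpow_zero, mul_one,
    mul_assoc, ← Real.rpow_add hl0] at hmul
  have hexp : -((n : ℝ) / a) + (n : ℝ) / b = e := by rw [hee]; ring
  rw [hexp] at hmul
  exact absurd hmul (not_le.mpr hfin)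

end
end

section
/- Counting lemma for $\alpha$-coverings: let $\alpha\in[0,1)$ and let $\Gamma_j=\{k\in\mathbb{Z}^n: B(\langle k\rangle^{\alpha/(1-\alpha)}k, C\langle k\rangle^{\alpha/(1-\alpha)})\cap\{\xi:(3/4)2^j\le|\xi|\le(4/3)2^j\}\neq\emptyset\}$ for a fixed $C>0$. Then there are constants $c_1,c_2>0$ (independent of $j$) such that $c_1 2^{jn(1-\alpha)}\le|\Gamma_j|\le c_2 2^{jn(1-\alpha)}$ for all sufficiently large $j$. -/
open MeasureTheory SchwartzMap Metric Set Function
open scoped ENNReal NNReal FourierTransform SchwartzMap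

noncomputable section

lemma norm_kv_sq {n : ℕ} (k : Fin n → ℤ) : ‖kv k‖ ^ 2 = ∑ i, ((k i : ℝ)) ^ 2 := by
  rw [EuclideanSpace.norm_eq, Real.sq_sqrt (by positivity)]
  simp [kv]

lemma jb_eq {n : ℕ} (k : Fin n → ℤ) : jb k = (1 + ‖kv k‖ ^ 2) ^ ((1:ℝ)/2) := by
  rw [jb, norm_kv_sq]

lemma one_le_jb {n : ℕ} (k : Fin n → ℤ) : 1 ≤ jb k := by
  rw [jb]; exact Real.one_le_rpow (le_add_of_nonneg_right (by positivity)) (by norm_num)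

lemma scl_pos {n : ℕ} (α : ℝ) (k : Fin n → ℤ) : 0 < scl α k :=
  Real.rpow_pos_of_pos (lt_of_lt_of_le one_pos (one_le_jb k)) _

lemma scl_eq {n : ℕ} (α : ℝ) (k : Fin n → ℤ) :
    scl α k = (1 + ‖kv k‖ ^ 2) ^ (α / (1 - α) / 2) := by
  rw [scl, jb_eq, ← Real.rpow_mul (by positivity)]
  ring_nf

lemma cen_norm {n : ℕ} (α : ℝ) (k : Fin n → ℤ) : ‖cen α k‖ = scl α k * ‖kv k‖ := by
  rw [cen, norm_smul, Real.norm_eq_abs, abs_of_nonneg (scl_pos α k).le]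

lemma abs_coord_le {n : ℕ} (x : En n) (i : Fin n) : |x i| ≤ ‖x‖ := by
  rw [EuclideanSpace.norm_eq]
  rw [show |x i| = Real.sqrt (‖x i‖ ^ 2) by
    rw [Real.sqrt_sq_eq_abs, Real.norm_eq_abs, abs_abs]]
  exact Real.sqrt_le_sqrt (Finset.single_le_sum (f := fun i => ‖x i‖ ^ 2)
    (fun i _ => by positivity) (Finset.mem_univ i))

lemma box_eq {n : ℕ} (s : Fin n → Finset ℤ) :
    {k : Fin n → ℤ | ∀ i, k i ∈ s i} = ↑(Fintype.piFinset s) := by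
  ext x; simp [Fintype.mem_piFinset]

lemma count_box {n : ℕ} (s : Fin n → Finset ℤ) :
    {k : Fin n → ℤ | ∀ i, k i ∈ s i}.ncard = ∏ i, (s i).card := by
  rw [box_eq, Set.ncard_coe_finset, Fintype.card_piFinset]

lemma box_finite {n : ℕ} (s : Fin n → Finset ℤ) :
    {k : Fin n → ℤ | ∀ i, k i ∈ s i}.Finite := by
  rw [box_eq]; exact (Fintype.piFinset s).finite_toSet

lemma pow_beta_le_scl {n : ℕ} {α : ℝ} (hβ : 0 ≤ α / (1 - α)) (k : Fin n → ℤ) :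
    ‖kv k‖ ^ (α / (1 - α)) ≤ scl α k := by
  rw [scl_eq, show ‖kv k‖ ^ (α/(1-α)) = (‖kv k‖ ^ 2) ^ (α/(1-α)/2) by
    rw [← Real.rpow_natCast ‖kv k‖ 2, ← Real.rpow_mul (norm_nonneg _)]
    congr 1; push_cast; ring]
  exact Real.rpow_le_rpow (by positivity) (by linarith) (by positivity)

lemma exists_eps (β : ℝ) (hβ : 0 ≤ β) : ∃ ε > (0:ℝ), (1+ε) ^ β ≤ 10/9 := by
  rcases eq_or_lt_of_le hβ with h | h
  · exact ⟨1, one_pos, by rw [← h, Real.rpow_zero]; norm_num⟩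
  · refine ⟨(10/9 : ℝ) ^ (1/β) - 1, ?_, ?_⟩
    · have : 1 < (10/9:ℝ) ^ (1/β) :=
        (Real.one_lt_rpow_iff_of_pos (by norm_num)).mpr (Or.inl ⟨by norm_num, by positivity⟩)
      linarith
    · rw [show (1 + ((10/9:ℝ)^(1/β) - 1)) = (10/9:ℝ)^(1/β) by ring,
        ← Real.rpow_mul (by norm_num), one_div, inv_mul_cancel₀ (ne_of_gt h), Real.rpow_one]

/-- The set `Γ_j`. -/
def Gam (n : ℕ) (α C : ℝ) (j : ℕ) : Set (Fin n → ℤ) :=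
  {k : Fin n → ℤ | (Metric.ball (cen α k) (C * scl α k) ∩
    {ξ : En n | (3 / 4) * 2 ^ j ≤ ‖ξ‖ ∧ ‖ξ‖ ≤ (4 / 3) * 2 ^ j}).Nonempty}

lemma gam_subset (n : ℕ) (α : ℝ) (hα : 0 ≤ α) (hα1 : α < 1) (C : ℝ) (hC : 0 < C)
    (j : ℕ) (D : ℝ) (hD : D = ((2:ℝ)^j) ^ (1-α)) (hD1 : 1 ≤ D) (h2C : 2*C ≤ D) :
    Gam n α C j ⊆ {k : Fin n → ℤ | ∀ i, k i ∈ Finset.Icc (-⌊4*D⌋) ⌊4*D⌋} := by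
  have h1α : 0 < 1 - α := by linarith
  have hβ0 : 0 ≤ α / (1-α) := div_nonneg hα h1α.le
  have hβ1 : α/(1-α) + 1 = 1/(1-α) := by field_simp; ring
  rintro k ⟨ξ, hξb, hξlo, hξhi⟩
  have hr4D : ‖kv k‖ ≤ 4*D := by
    by_cases hr : ‖kv k‖ ≤ 2*C
    · linarith
    · push_neg at hr
      have hr0 : 0 < ‖kv k‖ := lt_trans (by positivity) hr
      have h1 : ‖cen α k‖ - ‖ξ‖ ≤ ‖cen α k - ξ‖ := norm_sub_norm_le _ _
      have hd : ‖cen α k - ξ‖ < C * scl α k := by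
        have := mem_ball.mp hξb
        rwa [dist_eq_norm, norm_sub_rev] at this
      have hscl : scl α k * ‖kv k‖ < 4/3*2^j + C * scl α k := by
        rw [← cen_norm]; linarith [hξhi]
      have hCs : C * scl α k ≤ scl α k * ‖kv k‖ / 2 := by
        have hs := scl_pos α k; nlinarith
      have h83 : scl α k * ‖kv k‖ < 8/3*2^j := by linarith
      have hrb : ‖kv k‖ ^ ((1:ℝ)/(1-α)) ≤ scl α k * ‖kv k‖ := by
        rw [show (1:ℝ)/(1-α) = α/(1-α) + 1 from hβ1.symm,
          Real.rpow_add_one (ne_of_gt hr0)]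
        exact mul_le_mul_of_nonneg_right (pow_beta_le_scl hβ0 k) (norm_nonneg _)
      have h0 : ‖kv k‖ = (‖kv k‖ ^ ((1:ℝ)/(1-α))) ^ (1-α) := by
        rw [← Real.rpow_mul (norm_nonneg _), one_div, inv_mul_cancel₀ (ne_of_gt h1α),
          Real.rpow_one]
      rw [h0]
      calc (‖kv k‖ ^ ((1:ℝ)/(1-α))) ^ (1-α) ≤ ((8:ℝ)/3*2^j) ^ (1-α) :=
          Real.rpow_le_rpow (by positivity) (le_trans hrb h83.le) (by linarith)
        _ = ((8:ℝ)/3)^(1-α) * (((2:ℝ)^j))^(1-α) := Real.mul_rpow (by norm_num) (by positivity)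
        _ ≤ 8/3 * D := by
          rw [hD]
          have h8 : ((8:ℝ)/3)^(1-α) ≤ 8/3 := by
            nth_rewrite 2 [show (8:ℝ)/3 = ((8:ℝ)/3) ^ (1:ℝ) from (Real.rpow_one _).symm]
            exact Real.rpow_le_rpow_of_exponent_le (by norm_num) (by linarith)
          exact mul_le_mul_of_nonneg_right h8 (by positivity)
        _ ≤ 4*D := by linarith
  intro i
  rw [Finset.mem_Icc]
  have habs : |(k i : ℝ)| ≤ 4*D := le_trans (by simpa [kv] using abs_coord_le (kv k) i) hr4D
  obtain ⟨hlo, hhi⟩ := abs_le.mp habs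
  constructor
  · have : -(k i) ≤ ⌊4*D⌋ := Int.le_floor.mpr (by push_cast; linarith)
    linarith
  · exact Int.le_floor.mpr hhi

lemma gam_finite (n : ℕ) (α : ℝ) (hα : 0 ≤ α) (hα1 : α < 1) (C : ℝ) (hC : 0 < C)
    (j : ℕ) (D : ℝ) (hD : D = ((2:ℝ)^j) ^ (1-α)) (hD1 : 1 ≤ D) (h2C : 2*C ≤ D) :
    (Gam n α C j).Finite :=
  (box_finite _).subset (gam_subset n α hα hα1 C hC j D hD hD1 h2C)

lemma gam_upper (n : ℕ) (α : ℝ) (hα : 0 ≤ α) (hα1 : α < 1) (C : ℝ) (hC : 0 < C)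
    (j : ℕ) (D : ℝ) (hD : D = ((2:ℝ)^j) ^ (1-α)) (hD1 : 1 ≤ D) (h2C : 2*C ≤ D) :
    ((Gam n α C j).ncard : ℝ) ≤ 9^n * D^n := by
  have hM0 : (0:ℤ) ≤ ⌊4*D⌋ := Int.floor_nonneg.mpr (by positivity)
  have hMle : ((⌊4*D⌋:ℤ):ℝ) ≤ 4*D := Int.floor_le _
  have h1 : (Gam n α C j).ncard ≤ ((2*⌊4*D⌋+1).toNat)^n := by
    calc (Gam n α C j).ncard
        ≤ {k : Fin n → ℤ | ∀ i, k i ∈ Finset.Icc (-⌊4*D⌋) ⌊4*D⌋}.ncard :=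
          Set.ncard_le_ncard (gam_subset n α hα hα1 C hC j D hD hD1 h2C) (box_finite _)
      _ = ∏ _i : Fin n, (Finset.Icc (-⌊4*D⌋) ⌊4*D⌋).card := count_box _
      _ = ((2*⌊4*D⌋+1).toNat)^n := by
          rw [Finset.prod_const, Finset.card_univ, Fintype.card_fin, Int.card_Icc]
          congr 2; ring
  have h0 : ((2*⌊4*D⌋+1).toNat : ℤ) = 2*⌊4*D⌋+1 := Int.toNat_of_nonneg (by linarith)
  have h2 : (((2*⌊4*D⌋+1).toNat : ℕ) : ℝ) ≤ 9*D := by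
    calc (((2*⌊4*D⌋+1).toNat : ℕ) : ℝ) = (((2*⌊4*D⌋+1).toNat : ℤ) : ℝ) := by push_cast; ring
      _ = ((2*⌊4*D⌋+1 : ℤ) : ℝ) := by rw [h0]
      _ ≤ 9*D := by push_cast; linarith
  calc ((Gam n α C j).ncard : ℝ) ≤ (((((2*⌊4*D⌋+1).toNat)^n : ℕ)) : ℝ) := Nat.cast_le.mpr h1
    _ = ((((2*⌊4*D⌋+1).toNat : ℕ)) : ℝ)^n := by push_cast; ring
    _ ≤ (9*D)^n := pow_le_pow_left₀ (by positivity) h2 n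
    _ = 9^n * D^n := mul_pow _ _ _

set_option maxHeartbeats 1600000 in
lemma gam_lower (n : ℕ) (hn : 0 < n) (α : ℝ) (hα : 0 ≤ α) (hα1 : α < 1)
    (C : ℝ) (hC : 0 < C) (ε : ℝ) (hε : 0 < ε) (hεle : (1+ε) ^ (α/(1-α)/2) ≤ 10/9)
    (A B : ℝ) (hAdef : A = ((3:ℝ)/4) ^ (1-α)) (hBdef : B = ((6:ℝ)/5) ^ (1-α))
    (j : ℕ) (D : ℝ) (hD : D = ((2:ℝ)^j) ^ (1-α)) (hD1 : 1 ≤ D)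
    (hεD : 16/(9*ε) + 1 ≤ D) (hνD : 2*Real.sqrt n/(B-A) + 1 ≤ D)
    (hfin : (Gam n α C j).Finite) :
    ((B-A)/(2*Real.sqrt n))^n * D^n ≤ ((Gam n α C j).ncard : ℝ) := by
  have h1α : 0 < 1 - α := by linarith
  have hβ0 : 0 ≤ α / (1-α) := div_nonneg hα h1α.le
  have hβ1 : α/(1-α) + 1 = 1/(1-α) := by field_simp; ring
  have hA0 : 0 < A := hAdef ▸ Real.rpow_pos_of_pos (by norm_num) _
  have hA34 : (3:ℝ)/4 ≤ A := by
    rw [hAdef]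
    nth_rewrite 1 [show (3:ℝ)/4 = ((3:ℝ)/4) ^ (1:ℝ) from (Real.rpow_one _).symm]
    exact Real.rpow_le_rpow_of_exponent_ge (by norm_num) (by norm_num) (by linarith)
  have hA1 : A < 1 := hAdef ▸ Real.rpow_lt_one (by norm_num) (by norm_num) h1α
  have hB1 : 1 < B := hBdef ▸
    (Real.one_lt_rpow_iff_of_pos (by norm_num)).mpr (Or.inl ⟨by norm_num, h1α⟩)
  have hBA : 0 < B - A := by linarith
  have hn0 : (0:ℝ) < n := Nat.cast_pos.mpr hn
  have hsn : 0 < Real.sqrt n := Real.sqrt_pos.mpr hn0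
  have hD0 : 0 < D := lt_of_lt_of_le one_pos hD1
  set a := A*D/Real.sqrt n with hadef
  set b := B*D/Real.sqrt n with hbdef
  have ha0 : 0 < a := by positivity
  have hcnt : (B-A)/(2*Real.sqrt n) * D ≤ ((⌊b⌋ + 1 - ⌈a⌉ : ℤ) : ℝ) := by
    have h1 : b - 1 < ((⌊b⌋:ℤ):ℝ) := Int.sub_one_lt_floor b
    have h2 : ((⌈a⌉:ℤ):ℝ) < a + 1 := Int.ceil_lt_add_one a
    have h5 : 2*Real.sqrt n ≤ (B-A)*D := by
      have h6 : 2*Real.sqrt n/(B-A) ≤ D := by linarith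
      calc 2*Real.sqrt n ≤ D*(B-A) := (div_le_iff₀ hBA).mp h6
        _ = (B-A)*D := mul_comm _ _
    have hba : b - a = (B-A)*D/Real.sqrt n := by rw [hadef, hbdef]; ring
    have h7 : (B-A)/(2*Real.sqrt n) * D = (B-A)*D/(2*Real.sqrt n) := by ring
    have h8 : (B-A)*D/Real.sqrt n = 2*((B-A)*D/(2*Real.sqrt n)) := by
      field_simp
    have h9 : 1 ≤ (B-A)*D/(2*Real.sqrt n) := (one_le_div (by positivity)).mpr h5
    push_cast
    linarith
  have hm12 : (0:ℤ) ≤ ⌊b⌋ + 1 - ⌈a⌉ := by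
    by_contra h
    push_neg at h
    have h' : ((⌊b⌋ + 1 - ⌈a⌉ : ℤ):ℝ) < 0 := by exact_mod_cast h
    have hν : 0 < (B-A)/(2*Real.sqrt n) * D := by positivity
    linarith
  have hsubL : ↑(Fintype.piFinset fun _ : Fin n => Finset.Icc ⌈a⌉ ⌊b⌋) ⊆ Gam n α C j := by
    intro k hk
    rw [Finset.mem_coe, Fintype.mem_piFinset] at hk
    have hki : ∀ i, a ≤ (k i:ℝ) ∧ (k i:ℝ) ≤ b := by
      intro i
      obtain ⟨hl, hr⟩ := Finset.mem_Icc.mp (hk i)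
      exact ⟨le_trans (Int.le_ceil a) (by exact_mod_cast hl),
        le_trans (by exact_mod_cast hr) (Int.floor_le b)⟩
    have hr2 : ‖kv k‖^2 = ∑ i, ((k i:ℝ))^2 := norm_kv_sq k
    have hsum_lo : (n:ℝ) * a^2 ≤ ‖kv k‖^2 := by
      rw [hr2]
      calc (n:ℝ)*a^2 = ∑ _i : Fin n, a^2 := by
            rw [Finset.sum_const, Finset.card_univ, Fintype.card_fin, nsmul_eq_mul]
        _ ≤ ∑ i, ((k i:ℝ))^2 := Finset.sum_le_sum fun i _ => by nlinarith [(hki i).1, ha0]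
    have hsum_hi : ‖kv k‖^2 ≤ (n:ℝ) * b^2 := by
      rw [hr2]
      calc ∑ i, ((k i:ℝ))^2 ≤ ∑ _i : Fin n, b^2 :=
            Finset.sum_le_sum fun i _ => by nlinarith [(hki i).1, (hki i).2, ha0]
        _ = (n:ℝ)*b^2 := by
            rw [Finset.sum_const, Finset.card_univ, Fintype.card_fin, nsmul_eq_mul]
    have hsna : Real.sqrt n * a = A * D := by rw [hadef]; field_simp
    have hsnb : Real.sqrt n * b = B * D := by rw [hbdef]; field_simp
    have hr_lo : A*D ≤ ‖kv k‖ := by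
      have h1 : Real.sqrt ((n:ℝ)*a^2) ≤ Real.sqrt (‖kv k‖^2) := Real.sqrt_le_sqrt hsum_lo
      rw [Real.sqrt_sq (norm_nonneg _), Real.sqrt_mul (by positivity) _,
        Real.sqrt_sq ha0.le] at h1
      linarith [hsna]
    have hr_hi : ‖kv k‖ ≤ B*D := by
      have h1 : Real.sqrt (‖kv k‖^2) ≤ Real.sqrt ((n:ℝ)*b^2) := Real.sqrt_le_sqrt hsum_hi
      have hb0 : (0:ℝ) ≤ b := by positivity
      rw [Real.sqrt_sq (norm_nonneg _), Real.sqrt_mul (by positivity) _,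
        Real.sqrt_sq hb0] at h1
      linarith [hsnb]
    have hr0 : 0 < ‖kv k‖ := lt_of_lt_of_le (by positivity) hr_lo
    have hADj : (A*D) ^ ((1:ℝ)/(1-α)) = 3/4*2^j := by
      rw [show A*D = ((3:ℝ)/4*(2:ℝ)^j) ^ (1-α) by
          rw [hAdef, hD, ← Real.mul_rpow (by norm_num) (by positivity)],
        ← Real.rpow_mul (by positivity), mul_one_div, div_self (ne_of_gt h1α), Real.rpow_one]
    have hBDj : (B*D) ^ ((1:ℝ)/(1-α)) = 6/5*2^j := by
      rw [show B*D = ((6:ℝ)/5*(2:ℝ)^j) ^ (1-α) by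
          rw [hBdef, hD, ← Real.mul_rpow (by norm_num) (by positivity)],
        ← Real.rpow_mul (by positivity), mul_one_div, div_self (ne_of_gt h1α), Real.rpow_one]
    have hlow : 3/4*2^j ≤ scl α k * ‖kv k‖ := by
      calc (3:ℝ)/4*2^j = (A*D) ^ ((1:ℝ)/(1-α)) := hADj.symm
        _ ≤ ‖kv k‖ ^ ((1:ℝ)/(1-α)) := Real.rpow_le_rpow (by positivity) hr_lo (by positivity)
        _ = ‖kv k‖^(α/(1-α)) * ‖kv k‖ := by
            rw [show (1:ℝ)/(1-α) = α/(1-α) + 1 from hβ1.symm,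
              Real.rpow_add_one (ne_of_gt hr0)]
        _ ≤ scl α k * ‖kv k‖ :=
            mul_le_mul_of_nonneg_right (pow_beta_le_scl hβ0 k) (norm_nonneg _)
    have hr34 : 3/4*D ≤ ‖kv k‖ := le_trans (mul_le_mul_of_nonneg_right hA34 hD0.le) hr_lo
    have h1ε : 1/ε ≤ 9/16*D := by
      have e : 16/(9*ε) = (16/9)*(1/ε) := by ring
      rw [e] at hεD
      linarith
    have hr2e : 1/ε ≤ ‖kv k‖^2 := by
      have hra : (3/4*D)^2 ≤ ‖kv k‖^2 := pow_le_pow_left₀ (by positivity) hr34 2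
      have hDD : D ≤ D^2 := by nlinarith [hD1]
      have e2 : ((3:ℝ)/4*D)^2 = 9/16*D^2 := by ring
      linarith
    have hεr : 1 ≤ ε * ‖kv k‖^2 := by
      have := (div_le_iff₀ hε).mp hr2e
      linarith [this]
    have hsclb : (1+‖kv k‖^2)^(α/(1-α)/2) ≤ 10/9 * ‖kv k‖^(α/(1-α)) := by
      have hrβ : (‖kv k‖^2)^(α/(1-α)/2) = ‖kv k‖^(α/(1-α)) := by
        rw [← Real.rpow_natCast ‖kv k‖ 2, ← Real.rpow_mul (norm_nonneg _)]
        congr 1; push_cast; ring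
      calc (1+‖kv k‖^2)^(α/(1-α)/2) ≤ ((1+ε)*‖kv k‖^2)^(α/(1-α)/2) :=
          Real.rpow_le_rpow (by positivity) (by nlinarith) (by positivity)
        _ = (1+ε)^(α/(1-α)/2) * (‖kv k‖^2)^(α/(1-α)/2) :=
            Real.mul_rpow (by positivity) (by positivity)
        _ ≤ 10/9 * ‖kv k‖^(α/(1-α)) := by
            rw [hrβ]
            exact mul_le_mul_of_nonneg_right hεle (Real.rpow_nonneg (norm_nonneg _) _)
    have hhigh : scl α k * ‖kv k‖ ≤ 4/3*2^j := by
      calc scl α k * ‖kv k‖ = (1+‖kv k‖^2)^(α/(1-α)/2) * ‖kv k‖ := by rw [scl_eq]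
        _ ≤ (10/9 * ‖kv k‖^(α/(1-α))) * ‖kv k‖ :=
            mul_le_mul_of_nonneg_right hsclb (norm_nonneg _)
        _ = 10/9 * ‖kv k‖ ^ ((1:ℝ)/(1-α)) := by
            rw [show (1:ℝ)/(1-α) = α/(1-α) + 1 from hβ1.symm,
              Real.rpow_add_one (ne_of_gt hr0)]; ring
        _ ≤ 10/9 * (B*D) ^ ((1:ℝ)/(1-α)) := by
            have := Real.rpow_le_rpow (norm_nonneg _) hr_hi
              (by positivity : (0:ℝ) ≤ 1/(1-α))
            linarith
        _ = 10/9 * (6/5*2^j) := by rw [hBDj]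
        _ = 4/3*2^j := by ring
    exact ⟨cen α k, mem_ball_self (mul_pos hC (scl_pos α k)),
      by rw [Set.mem_setOf_eq, cen_norm]; exact ⟨hlow, hhigh⟩⟩
  have h1 : ((⌊b⌋+1-⌈a⌉).toNat)^n ≤ (Gam n α C j).ncard := by
    calc ((⌊b⌋+1-⌈a⌉).toNat)^n = ∏ _i : Fin n, (Finset.Icc ⌈a⌉ ⌊b⌋).card := by
          rw [Finset.prod_const, Finset.card_univ, Fintype.card_fin, Int.card_Icc]
      _ = (↑(Fintype.piFinset fun _ : Fin n => Finset.Icc ⌈a⌉ ⌊b⌋) : Set (Fin n → ℤ)).ncard := by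
          rw [Set.ncard_coe_finset, Fintype.card_piFinset, Finset.prod_const,
            Finset.card_univ, Fintype.card_fin]
      _ ≤ (Gam n α C j).ncard := Set.ncard_le_ncard hsubL hfin
  have h2 : (B-A)/(2*Real.sqrt n) * D ≤ (((⌊b⌋+1-⌈a⌉).toNat : ℕ) : ℝ) := by
    calc (B-A)/(2*Real.sqrt n) * D ≤ ((⌊b⌋ + 1 - ⌈a⌉ : ℤ) : ℝ) := hcnt
      _ = (((⌊b⌋+1-⌈a⌉).toNat : ℕ) : ℝ) := by
          conv_rhs => rw [← Int.cast_natCast (R := ℝ)]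
          rw [Int.toNat_of_nonneg hm12]
  calc ((B-A)/(2*Real.sqrt n))^n * D^n = ((B-A)/(2*Real.sqrt n) * D)^n := (mul_pow _ _ _).symm
    _ ≤ ((((⌊b⌋+1-⌈a⌉).toNat : ℕ) : ℝ))^n := pow_le_pow_left₀ (by positivity) h2 n
    _ = (((((⌊b⌋+1-⌈a⌉).toNat)^n : ℕ)) : ℝ) := by push_cast; ring
    _ ≤ ((Gam n α C j).ncard : ℝ) := Nat.cast_le.mpr h1

set_option maxHeartbeats 1600000 in
/-- counting lemma for `α`-coverings: the number of `k ∈ ℤⁿ` whose piece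
`B(⟨k⟩^{α/(1-α)} k, C⟨k⟩^{α/(1-α)})` meets the dyadic annulus `(3/4)2^j ≤ |ξ| ≤ (4/3)2^j`
is comparable to `2^{jn(1-α)}` for large `j`. -/
theorem alpha_covering_counting (n : ℕ) (hn : 0 < n) (α : ℝ) (hα : 0 ≤ α) (hα1 : α < 1)
    (C : ℝ) (hC : 0 < C) :
    ∃ c₁ > (0 : ℝ), ∃ c₂ > (0 : ℝ), ∃ J : ℕ, ∀ j : ℕ, J ≤ j →
      c₁ * 2 ^ ((j : ℝ) * n * (1 - α)) ≤
        (({k : Fin n → ℤ | (Metric.ball (cen α k) (C * scl α k) ∩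
          {ξ : En n | (3 / 4) * 2 ^ j ≤ ‖ξ‖ ∧ ‖ξ‖ ≤ (4 / 3) * 2 ^ j}).Nonempty}).ncard : ℝ) ∧
      (({k : Fin n → ℤ | (Metric.ball (cen α k) (C * scl α k) ∩
          {ξ : En n | (3 / 4) * 2 ^ j ≤ ‖ξ‖ ∧ ‖ξ‖ ≤ (4 / 3) * 2 ^ j}).Nonempty}).ncard : ℝ) ≤
        c₂ * 2 ^ ((j : ℝ) * n * (1 - α)) := by
  have h1α : 0 < 1 - α := by linarith
  obtain ⟨ε, hε, hεle⟩ := exists_eps (α/(1-α)/2) (by positivity)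
  have hA0 : (0:ℝ) < ((3:ℝ)/4) ^ (1-α) := Real.rpow_pos_of_pos (by norm_num) _
  have hA1 : ((3:ℝ)/4) ^ (1-α) < 1 := Real.rpow_lt_one (by norm_num) (by norm_num) h1α
  have hB1 : 1 < ((6:ℝ)/5) ^ (1-α) :=
    (Real.one_lt_rpow_iff_of_pos (by norm_num)).mpr (Or.inl ⟨by norm_num, h1α⟩)
  have hBA : 0 < ((6:ℝ)/5) ^ (1-α) - ((3:ℝ)/4) ^ (1-α) := by linarith
  have hn0 : (0:ℝ) < n := Nat.cast_pos.mpr hn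
  have hsn : 0 < Real.sqrt n := Real.sqrt_pos.mpr hn0
  have h2γ : (1:ℝ) < (2:ℝ) ^ (1-α) :=
    (Real.one_lt_rpow_iff_of_pos (by norm_num)).mpr (Or.inl ⟨one_lt_two, h1α⟩)
  obtain ⟨J, hJ⟩ := pow_unbounded_of_one_lt
    (max (max (2*C) (16/(9*ε) + 1))
      (2*Real.sqrt n/(((6:ℝ)/5) ^ (1-α) - ((3:ℝ)/4) ^ (1-α)) + 1)) h2γ
  refine ⟨((((6:ℝ)/5) ^ (1-α) - ((3:ℝ)/4) ^ (1-α))/(2*Real.sqrt n))^n,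
    pow_pos (div_pos hBA (by positivity)) n, 9^n, by positivity, J, ?_⟩
  intro j hj
  have h2j1 : (1:ℝ) ≤ (2:ℝ)^j := one_le_pow₀ one_le_two
  have hD1 : 1 ≤ ((2:ℝ)^j) ^ (1-α) := Real.one_le_rpow h2j1 (by linarith)
  have hKD : max (max (2*C) (16/(9*ε) + 1))
      (2*Real.sqrt n/(((6:ℝ)/5) ^ (1-α) - ((3:ℝ)/4) ^ (1-α)) + 1)
      ≤ ((2:ℝ)^j) ^ (1-α) := by
    refine hJ.le.trans ?_
    rw [← Real.rpow_natCast ((2:ℝ)^(1-α)) J, ← Real.rpow_natCast (2:ℝ) j,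
      ← Real.rpow_mul (by norm_num), ← Real.rpow_mul (by norm_num)]
    apply Real.rpow_le_rpow_of_exponent_le one_le_two
    have : (J:ℝ) ≤ j := Nat.cast_le.mpr hj
    nlinarith
  have h2C : 2*C ≤ ((2:ℝ)^j) ^ (1-α) :=
    le_trans (le_trans (le_max_left _ _) (le_max_left _ _)) hKD
  have hεD : 16/(9*ε) + 1 ≤ ((2:ℝ)^j) ^ (1-α) :=
    le_trans (le_trans (le_max_right _ _) (le_max_left _ _)) hKD
  have hνD : 2*Real.sqrt n/(((6:ℝ)/5) ^ (1-α) - ((3:ℝ)/4) ^ (1-α)) + 1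
      ≤ ((2:ℝ)^j) ^ (1-α) := le_trans (le_max_right _ _) hKD
  have hDn : (((2:ℝ)^j) ^ (1-α)) ^ n = (2:ℝ) ^ ((j:ℝ)*n*(1-α)) := by
    rw [← Real.rpow_natCast (2:ℝ) j, ← Real.rpow_mul (by norm_num),
      ← Real.rpow_natCast ((2:ℝ) ^ ((j:ℝ)*(1-α))) n, ← Real.rpow_mul (by norm_num)]
    congr 1; ring
  have hfin : (Gam n α C j).Finite :=
    gam_finite n α hα hα1 C hC j _ rfl hD1 h2C
  have hup := gam_upper n α hα hα1 C hC j _ rfl hD1 h2C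
  have hlo := gam_lower n hn α hα hα1 C hC ε hε hεle _ _ rfl rfl j _ rfl hD1 hεD hνD hfin
  rw [hDn] at hup hlo
  exact ⟨hlo, hup⟩

end
end
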